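/- arXiv:2302.05394 — 8 statements merged into one kernel-verified Lean document; each statement's English description precedes it below -/
import Mathlib

section
/- Let F = (P,Q) : Σ → ℝ² be a C¹ non-singular map on the strip Σ = I × ℝ. If every nonempty level set {(x,y) ∈ Σ : P(x,y) = p̄} of the first component P is connected, then F is injective on Σ. -/
open Set

section Core

variable {X : Type*} [TopologicalSpace X] [T2Space X]

/-- `x` is connected to `a` by a continuous section of `f` over the interval
`uIcc t₀ (f x)`. -/
def HasSect (f : X → ℝ) (t₀ : ℝ) (a : X) (x : X) : Prop :=
  ∃ g : ℝ → X, Continuous g ∧ g t₀ = a ∧ g (f x) = x ∧ ∀ t ∈ uIcc t₀ (f x), f (g t) = t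

/-- Agreement lemma: a section agrees with the local inverse `e.symm` on the whole
overlap interval, as soon as they agree at one point. -/
lemma sect_agree (f : X → ℝ) {e : OpenPartialHomeomorph X ℝ} (he : ∀ z ∈ e.source, f z = e z)
    {lo hi : ℝ} (hlh : lo ≤ hi) (hT : Icc lo hi ⊆ e.target)
    {g : ℝ → X} (hg : Continuous g) {t₀ u : ℝ}
    (hsec : ∀ t ∈ uIcc t₀ u, f (g t) = t)
    {w : ℝ} (hw1 : w ∈ uIcc t₀ u) (hw2 : w ∈ Icc lo hi) (hw : g w = e.symm w) :
    ∀ t ∈ uIcc t₀ u ∩ Icc lo hi, g t = e.symm t := by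
  set E : ℝ → X := fun t => e.symm (min hi (max lo t)) with hE
  have hclamp : ∀ t : ℝ, min hi (max lo t) ∈ Icc lo hi := by
    intro t
    constructor
    · exact le_min hlh (le_max_left _ _)
    · exact min_le_left _ _
  have hEc : Continuous E := by
    apply e.continuousOn_symm.comp_continuous
    · exact continuous_const.min (continuous_const.max continuous_id)
    · exact fun t => hT (hclamp t)
  have hEeq : ∀ t ∈ Icc lo hi, E t = e.symm t := by
    intro t ht
    simp only [hE, max_eq_right ht.1, min_eq_right ht.2]
  -- key equivalence on the overlap
  have hkey : ∀ t ∈ uIcc t₀ u ∩ Icc lo hi, (g t = e.symm t ↔ g t ∈ e.source) := by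
    intro t ht
    constructor
    · intro h; rw [h]; exact e.map_target (hT ht.2)
    · intro h
      have h1 : e (g t) = t := by rw [← he _ h]; exact hsec t ht.1
      calc g t = e.symm (e (g t)) := (e.left_inv h).symm
        _ = e.symm t := by rw [h1]
  -- clopen argument on the overlap interval
  set D := uIcc t₀ u ∩ Icc lo hi with hD
  have hDpc : IsPreconnected D :=
    (Set.ordConnected_uIcc.inter Set.ordConnected_Icc).isPreconnected
  set U := g ⁻¹' e.source with hU
  set V := {t | g t ≠ E t} with hV
  have hUo : IsOpen U := e.open_source.preimage hg
  have hVo : IsOpen V := (isClosed_eq hg hEc).isOpen_compl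
  have hcover : D ⊆ U ∪ V := by
    intro t ht
    by_cases h : g t = E t
    · left
      have : g t = e.symm t := by rw [h, hEeq t ht.2]
      exact (hkey t ht).1 this
    · right; exact h
  have hdisj : D ∩ (U ∩ V) = ∅ := by
    ext t
    simp only [mem_inter_iff, mem_empty_iff_false, iff_false, not_and]
    intro htD htU htV
    exact htV (((hkey t htD).2 htU).trans (hEeq t htD.2).symm)
  have hwU : w ∈ D ∩ U := by
    refine ⟨⟨hw1, hw2⟩, ?_⟩
    simp only [hU, mem_preimage, hw]
    exact e.map_target (hT hw2)
  have hVempty : D ∩ V = ∅ := by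
    by_contra h
    rcases hDpc U V hUo hVo hcover ⟨w, hwU⟩ (nonempty_iff_ne_empty.mpr h) with ⟨t, ht⟩
    rw [hdisj] at ht
    exact ht
  intro t ht
  by_contra h
  have : g t ≠ E t := fun h' => h (h'.trans (hEeq t ht.2))
  exact absurd hVempty (nonempty_iff_ne_empty.mp ⟨t, ht, this⟩)

/-- Extension lemma: if `x₁` has a section and `x₁, x₂` both lie in the source of a
local chart whose target contains `Icc lo hi ∋ f x₁, f x₂`, then `x₂` has a section. -/
lemma sect_extend (f : X → ℝ) (t₀ : ℝ) (a : X) {e : OpenPartialHomeomorph X ℝ}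
    (he : ∀ z ∈ e.source, f z = e z) {lo hi : ℝ}
    (hT : Icc lo hi ⊆ e.target) {x₁ x₂ : X}
    (h1s : x₁ ∈ e.source) (h2s : x₂ ∈ e.source)
    (h1 : f x₁ ∈ Icc lo hi) (h2 : f x₂ ∈ Icc lo hi)
    (hx1 : HasSect f t₀ a x₁) : HasSect f t₀ a x₂ := by
  have hlh : lo ≤ hi := h1.1.trans h1.2
  obtain ⟨g, hg, hg0, hg1, hsec⟩ := hx1
  set u := f x₁ with hu
  set u' := f x₂ with hu'
  have hx1symm : e.symm u = x₁ := by
    have : e x₁ = u := (he _ h1s).symm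
    rw [← this, e.left_inv h1s]
  have hx2symm : e.symm u' = x₂ := by
    have : e x₂ = u' := (he _ h2s).symm
    rw [← this, e.left_inv h2s]
  have agr : ∀ t ∈ uIcc t₀ u ∩ Icc lo hi, g t = e.symm t :=
    sect_agree f he hlh hT hg hsec (right_mem_uIcc) h1 (hg1.trans hx1symm.symm)
  -- the local inverse, clamped
  set E : ℝ → X := fun t => e.symm (min hi (max lo t)) with hEdef
  have hclamp : ∀ t : ℝ, min hi (max lo t) ∈ Icc lo hi := by
    intro t
    exact ⟨le_min hlh (le_max_left _ _), min_le_left _ _⟩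
  have hEc : Continuous E := by
    apply e.continuousOn_symm.comp_continuous
    · exact continuous_const.min (continuous_const.max continuous_id)
    · exact fun t => hT (hclamp t)
  have hEeq : ∀ t ∈ Icc lo hi, E t = e.symm t := by
    intro t ht
    simp only [hEdef, max_eq_right ht.1, min_eq_right ht.2]
  have hfE : ∀ t ∈ Icc lo hi, f (E t) = t := by
    intro t ht
    have h1' : E t = e.symm t := hEeq t ht
    have h2' : e.symm t ∈ e.source := e.map_target (hT ht)
    rw [h1', he _ h2', e.right_inv (hT ht)]
  by_cases hmem : u' ∈ uIcc t₀ u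
  · -- Case 1 : reuse g
    refine ⟨g, hg, hg0, ?_, ?_⟩
    · rw [← hu', agr u' ⟨hmem, h2⟩, hx2symm]
    · intro t ht
      exact hsec t (uIcc_subset_uIcc left_mem_uIcc hmem ht)
  · by_cases ht₀ : t₀ ∈ Icc lo hi
    · -- Case 2 : use E alone
      refine ⟨E, hEc, ?_, ?_, ?_⟩
      · rw [hEeq t₀ ht₀, ← agr t₀ ⟨left_mem_uIcc, ht₀⟩, hg0]
      · rw [← hu', hEeq u' h2, hx2symm]
      · intro t ht
        exact hfE t (Set.ordConnected_Icc.uIcc_subset ht₀ h2 ht)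
    · -- Case 3 : glue g and E
      have hcase : (t₀ ≤ u ∧ u ≤ u') ∨ (u' ≤ u ∧ u ≤ t₀) := by
        rcases not_and_or.mp (fun hx => ht₀ ⟨hx.1, hx.2⟩) with h | h
        · -- t₀ < lo
          have h' : t₀ < lo := lt_of_not_ge h
          have htu : t₀ ≤ u := h'.le.trans h1.1
          left
          refine ⟨htu, ?_⟩
          by_contra hlt
          exact hmem (by
            rw [uIcc_of_le htu]
            exact ⟨h'.le.trans h2.1, (lt_of_not_ge hlt).le⟩)
        · -- hi < t₀
          have h' : hi < t₀ := lt_of_not_ge h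
          have htu : u ≤ t₀ := h1.2.trans h'.le
          right
          refine ⟨?_, htu⟩
          by_contra hlt
          exact hmem (by
            rw [uIcc_of_ge htu]
            exact ⟨(lt_of_not_ge hlt).le, h2.2.trans h'.le⟩)
      have hgu : g u = E u := by
        rw [hg1, ← hx1symm, hEeq u h1]
      rcases hcase with ⟨htu, huu'⟩ | ⟨huu', htu⟩
      · -- t₀ ≤ u ≤ u' ; glue at u, g on the left
        refine ⟨fun t => if t ≤ u then g t else E t, ?_, ?_, ?_, ?_⟩
        · exact Continuous.if_le hg hEc continuous_id continuous_const
            (fun t ht => by rw [ht]; exact hgu)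
        · simp only [if_pos htu, hg0]
        · rw [← hu']
          by_cases h : u' ≤ u
          · have heq : u' = u := le_antisymm h huu'
            have hx12 : x₁ = x₂ := by rw [← hx1symm, ← hx2symm, heq]
            simp only [if_pos h]
            rw [heq, hg1]; exact hx12
          · simp only [if_neg h]
            rw [hEeq u' h2, hx2symm]
        · intro t ht
          rw [← hu'] at ht
          rw [uIcc_of_le (htu.trans huu')] at ht
          by_cases h : t ≤ u
          · simp only [if_pos h]
            exact hsec t (by rw [uIcc_of_le htu]; exact ⟨ht.1, h⟩)
          · simp only [if_neg h]
            exact hfE t ⟨h1.1.trans (lt_of_not_ge h).le, ht.2.trans h2.2⟩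
      · -- u' ≤ u ≤ t₀ ; glue at u, g on the right
        refine ⟨fun t => if u ≤ t then g t else E t, ?_, ?_, ?_, ?_⟩
        · exact Continuous.if_le hg hEc continuous_const continuous_id
            (fun t ht => by rw [← ht]; exact hgu)
        · simp only [if_pos htu, hg0]
        · rw [← hu']
          by_cases h : u ≤ u'
          · have heq : u' = u := le_antisymm huu' h
            have hx12 : x₁ = x₂ := by rw [← hx1symm, ← hx2symm, heq]
            simp only [if_pos h]
            rw [heq, hg1]; exact hx12
          · simp only [if_neg h]
            rw [hEeq u' h2, hx2symm]
        · intro t ht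
          rw [← hu'] at ht
          rw [uIcc_of_ge (huu'.trans htu)] at ht
          by_cases h : u ≤ t
          · simp only [if_pos h]
            exact hsec t (by rw [uIcc_of_ge htu]; exact ⟨h, ht.2⟩)
          · simp only [if_neg h]
            exact hfE t ⟨h2.1.trans ht.1, (lt_of_not_ge h).le.trans h1.2⟩

end Core

/-- A map to `ℝ` which is locally a homeomorphism, on a preconnected Hausdorff space,
is injective. -/
lemma injective_of_etale {X : Type*} [TopologicalSpace X] [T2Space X] [PreconnectedSpace X]
    (f : X → ℝ)
    (hloc : ∀ x : X, ∃ e : OpenPartialHomeomorph X ℝ, x ∈ e.source ∧ ∀ z ∈ e.source, f z = e z) :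
    Function.Injective f := by
  have hcont : Continuous f := by
    rw [continuous_iff_continuousAt]
    intro x
    obtain ⟨e, hx, he⟩ := hloc x
    have hev : f =ᶠ[nhds x] e :=
      Filter.eventuallyEq_of_mem (e.open_source.mem_nhds hx) he
    exact (e.continuousAt hx).congr hev.symm
  intro a b hab
  set t₀ := f a with ht₀
  set C := {x : X | HasSect f t₀ a x} with hC
  have haC : a ∈ C := by
    refine ⟨fun _ => a, continuous_const, rfl, rfl, ?_⟩
    intro t ht
    rw [uIcc_self, mem_singleton_iff] at ht
    rw [ht]
  have key : ∀ x : X, ∃ U : Set X, IsOpen U ∧ x ∈ U ∧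
      (∀ x' ∈ U, x ∈ C → x' ∈ C) ∧ (∀ x' ∈ U, x' ∈ C → x ∈ C) := by
    intro x
    obtain ⟨e, hx, he⟩ := hloc x
    have hfx : f x ∈ e.target := by rw [he x hx]; exact e.map_source hx
    obtain ⟨ε, hε, hball⟩ := Metric.isOpen_iff.mp e.open_target _ hfx
    have hIcc : Icc (f x - ε/2) (f x + ε/2) ⊆ e.target := by
      intro t ht
      apply hball
      rw [Metric.mem_ball, Real.dist_eq, abs_lt]
      constructor <;> [linarith [ht.1]; linarith [ht.2]]
    have hxIcc : f x ∈ Icc (f x - ε/2) (f x + ε/2) := ⟨by linarith, by linarith⟩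
    refine ⟨e.source ∩ f ⁻¹' Ioo (f x - ε/2) (f x + ε/2),
      e.open_source.inter (isOpen_Ioo.preimage hcont),
      ⟨hx, by constructor <;> [linarith; linarith]⟩, ?_, ?_⟩
    · intro x' hx' hxC
      exact sect_extend f t₀ a he hIcc hx hx'.1 hxIcc (Ioo_subset_Icc_self hx'.2) hxC
    · intro x' hx' hx'C
      exact sect_extend f t₀ a he hIcc hx'.1 hx (Ioo_subset_Icc_self hx'.2) hxIcc hx'C
  have hCopen : IsOpen C := by
    rw [isOpen_iff_forall_mem_open]
    intro x hxC
    obtain ⟨U, hUo, hxU, hfwd, _⟩ := key x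
    exact ⟨U, fun x' hx' => hfwd x' hx' hxC, hUo, hxU⟩
  have hCclosed : IsClosed C := by
    apply isClosed_of_closure_subset
    intro x hx
    obtain ⟨U, hUo, hxU, _, hbwd⟩ := key x
    obtain ⟨x', hx'U, hx'C⟩ := _root_.mem_closure_iff.mp hx U hUo hxU
    exact hbwd x' hx'U hx'C
  have hCuniv : C = univ := IsClopen.eq_univ ⟨hCclosed, hCopen⟩ ⟨a, haC⟩
  have hbC : b ∈ C := hCuniv ▸ mem_univ b
  obtain ⟨g, _, hg0, hgb, _⟩ := hbC
  rw [← hab] at hgb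
  exact hg0.symm.trans hgb


/-- Let `F = (P,Q) : Sig → ℝ²` be a `C¹` non-singular map on the strip
`Sig = I × ℝ` (with `I ⊆ ℝ` an open interval). If every nonempty level set of the first
component `P` is connected, then `F` is injective on `Sig`. -/
theorem nonsingular_connected_level_sets_injective
    (I : Set ℝ) (hIopen : IsOpen I) (hIconn : IsPreconnected I)
    (F : ℝ × ℝ → ℝ × ℝ)
    (hF : ContDiffOn ℝ 1 F (I ×ˢ (univ : Set ℝ)))
    (hns : ∀ z ∈ I ×ˢ (univ : Set ℝ), (fderiv ℝ F z).det ≠ 0)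
    (hlev : ∀ c : ℝ, ({z ∈ I ×ˢ (univ : Set ℝ) | (F z).1 = c}).Nonempty →
      IsConnected {z ∈ I ×ˢ (univ : Set ℝ) | (F z).1 = c}) :
    Set.InjOn F (I ×ˢ (univ : Set ℝ)) := by
  have hSig : IsOpen (I ×ˢ (univ : Set ℝ)) := hIopen.prod isOpen_univ
  intro z₁ hz₁ z₂ hz₂ hF12
  set c := (F z₁).1 with hc
  set S := {z ∈ I ×ˢ (univ : Set ℝ) | (F z).1 = c} with hSdef
  have hz₁S : z₁ ∈ S := ⟨hz₁, rfl⟩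
  have hz₂S : z₂ ∈ S := ⟨hz₂, by rw [← hF12]⟩
  haveI : PreconnectedSpace S :=
    Subtype.preconnectedSpace (hlev c ⟨z₁, hz₁S⟩).isPreconnected
  have key : Function.Injective (fun w : S => (F (w : ℝ × ℝ)).2) := by
    apply injective_of_etale
    intro x
    classical
    have hzSig : (x : ℝ × ℝ) ∈ I ×ˢ (univ : Set ℝ) := x.2.1
    have hcd : ContDiffAt ℝ 1 F (x : ℝ × ℝ) := hF.contDiffAt (hSig.mem_nhds hzSig)
    have hsd : HasStrictFDerivAt F (fderiv ℝ F (x : ℝ × ℝ)) (x : ℝ × ℝ) :=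
      hcd.hasStrictFDerivAt one_ne_zero
    have hdet : (fderiv ℝ F (x : ℝ × ℝ)).det ≠ 0 := hns _ hzSig
    set A' : (ℝ × ℝ) ≃L[ℝ] (ℝ × ℝ) :=
      (LinearMap.equivOfDetNeZero ((fderiv ℝ F (x : ℝ × ℝ)) : (ℝ × ℝ) →ₗ[ℝ] (ℝ × ℝ))
        hdet).toContinuousLinearEquiv with hA'
    have hsd' : HasStrictFDerivAt F ((A' : (ℝ × ℝ) →L[ℝ] (ℝ × ℝ))) (x : ℝ × ℝ) := by
      have hAA : ((A' : (ℝ × ℝ) →L[ℝ] (ℝ × ℝ)) : (ℝ × ℝ) →L[ℝ] (ℝ × ℝ))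
          = fderiv ℝ F (x : ℝ × ℝ) := by
        refine ContinuousLinearMap.ext fun v => ?_
        rfl
      rw [hAA]
      exact hsd
    set Ψ := (hsd'.toOpenPartialHomeomorph F).restrOpen (I ×ˢ (univ : Set ℝ)) hSig with hΨ
    have hΨcoe : ∀ w, Ψ w = F w := by
      intro w
      have : ⇑(hsd'.toOpenPartialHomeomorph F) = F := hsd'.toOpenPartialHomeomorph_coe
      exact congrFun this w
    have hΨsource : Ψ.source ⊆ I ×ˢ (univ : Set ℝ) := by
      rw [hΨ, OpenPartialHomeomorph.restrOpen_source]
      exact inter_subset_right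
    have hzΨ : (x : ℝ × ℝ) ∈ Ψ.source := by
      rw [hΨ, OpenPartialHomeomorph.restrOpen_source]
      exact ⟨hsd'.mem_toOpenPartialHomeomorph_source, hzSig⟩
    have hFΨ : ∀ w ∈ Ψ.source, F w = Ψ w := fun w _ => (hΨcoe w).symm
    -- points of `S` in the source have their image on the line `{c} × ℝ`
    have hmem_t : ∀ w : S, (w : ℝ × ℝ) ∈ Ψ.source → (c, (F (w : ℝ × ℝ)).2) ∈ Ψ.target := by
      intro w hw
      have h1 : (F (w : ℝ × ℝ)).1 = c := w.2.2
      have h2 : ((c, (F (w : ℝ × ℝ)).2) : ℝ × ℝ) = F (w : ℝ × ℝ) := by rw [← h1]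
      rw [h2, hFΨ _ hw]
      exact Ψ.map_source hw
    have hFsymm : ∀ q : ℝ, (c, q) ∈ Ψ.target → F (Ψ.symm (c, q)) = (c, q) := by
      intro q hq
      rw [hFΨ _ (Ψ.map_target hq)]
      exact Ψ.right_inv hq
    have hsymm_mem : ∀ q : ℝ, (c, q) ∈ Ψ.target → Ψ.symm (c, q) ∈ S := by
      intro q hq
      refine ⟨hΨsource (Ψ.map_target hq), ?_⟩
      rw [hFsymm q hq]
    have hlinec : Continuous fun q : ℝ => ((c, q) : ℝ × ℝ) :=
      continuous_const.prodMk continuous_id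
    refine ⟨⟨⟨⟨fun w => (F (w : ℝ × ℝ)).2,
        fun q => if h : (c, q) ∈ Ψ.target then ⟨Ψ.symm (c, q), hsymm_mem q h⟩ else x,
        Subtype.val ⁻¹' Ψ.source, {q : ℝ | (c, q) ∈ Ψ.target},
        ?_, ?_, ?_, ?_⟩, ?_, ?_⟩, ?_, ?_⟩, ?_, ?_⟩
    rotate_left 4; pick_goal 4; pick_goal 4; rotate_right 4
    · -- map_source'
      exact fun w hw => hmem_t w hw
    · -- map_target'
      intro q hq
      simp only [mem_setOf_eq] at hq
      simp only [dif_pos hq, mem_preimage]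
      exact Ψ.map_target hq
    · -- left_inv'
      intro w hw
      have ht := hmem_t w hw
      simp only [dif_pos ht]
      apply Subtype.ext
      show Ψ.symm (c, (F (w : ℝ × ℝ)).2) = (w : ℝ × ℝ)
      have h1 : (F (w : ℝ × ℝ)).1 = c := w.2.2
      have h2 : ((c, (F (w : ℝ × ℝ)).2) : ℝ × ℝ) = F (w : ℝ × ℝ) := by rw [← h1]
      rw [h2, hFΨ _ hw]
      exact Ψ.left_inv hw
    · -- right_inv'
      intro q hq
      simp only [mem_setOf_eq] at hq
      simp only [dif_pos hq]
      show (F (Ψ.symm (c, q))).2 = q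
      rw [hFsymm q hq]
    · -- open_source
      exact Ψ.open_source.preimage continuous_subtype_val
    · -- open_target
      exact Ψ.open_target.preimage hlinec
    · -- continuousOn_toFun
      have hFc : ContinuousOn F (I ×ˢ (univ : Set ℝ)) := hF.continuousOn
      exact continuous_snd.comp_continuousOn
        (hFc.comp continuous_subtype_val.continuousOn (fun w hw => hΨsource hw))
    · -- continuousOn_invFun
      rw [Topology.IsEmbedding.subtypeVal.continuousOn_iff]
      have hψ : ContinuousOn (fun q : ℝ => Ψ.symm (c, q)) {q : ℝ | (c, q) ∈ Ψ.target} :=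
        Ψ.continuousOn_symm.comp hlinec.continuousOn (fun q hq => hq)
      apply hψ.congr
      intro q hq
      simp only [mem_setOf_eq] at hq
      simp only [Function.comp, dif_pos hq]
    · -- membership of x
      show (x : ℝ × ℝ) ∈ Ψ.source
      exact hzΨ
    · -- agreement
      intro z hz
      rfl
  have : (⟨z₁, hz₁S⟩ : S) = ⟨z₂, hz₂S⟩ := key (by show (F z₁).2 = (F z₂).2; rw [hF12])
  exact congrArg Subtype.val this
end

section
/- Let I ⊆ ℝ be an open interval, h, k positive integers, and p, q real analytic on I with h p'(x) q(x) − k q'(x) p(x) = 0 for all x ∈ I. If neither p nor q vanishes identically on I, then there exist constants c_p, c_q ∈ ℝ with c_p c_q ≠ 0 such that c_q · q(x)^k + c_p · p(x)^h = 0 for all x ∈ I. -/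
open Set

/-- Lemma 2 (ii). Let `I ⊆ ℝ` be an open interval, `h, k` positive
integers, and `p, q` real analytic on `I` with `h p'(x) q(x) − k q'(x) p(x) = 0` on `I`.
If neither `p` nor `q` vanishes identically on `I`, then there exist constants
`c_p, c_q` with `c_p c_q ≠ 0` such that `c_q q(x)^k + c_p p(x)^h = 0` on `I`. -/
theorem analytic_powers_linear_relation
    (I : Set ℝ) (hIopen : IsOpen I) (hIconn : IsPreconnected I)
    (h k : ℕ) (hh : 0 < h) (hk : 0 < k)
    (p q : ℝ → ℝ) (hp : AnalyticOnNhd ℝ p I) (hq : AnalyticOnNhd ℝ q I)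
    (heq : ∀ x ∈ I, (h : ℝ) * deriv p x * q x - (k : ℝ) * deriv q x * p x = 0)
    (hp0 : ∃ x ∈ I, p x ≠ 0) (hq0 : ∃ x ∈ I, q x ≠ 0) :
    ∃ cp cq : ℝ, cp * cq ≠ 0 ∧ ∀ x ∈ I, cq * q x ^ k + cp * p x ^ h = 0 := by
  obtain ⟨x₀, hx₀I, hqx₀⟩ := hq0
  set f : ℝ → ℝ := fun x => p x ^ h with hfdef
  set g : ℝ → ℝ := fun x => q x ^ k with hgdef
  have hfA : AnalyticOnNhd ℝ f I := fun x hx => (hp x hx).pow h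
  have hgA : AnalyticOnNhd ℝ g I := fun x hx => (hq x hx).pow k
  -- the Wronskian of f and g vanishes on I
  have hW : ∀ x ∈ I, deriv f x * g x - f x * deriv g x = 0 := by
    intro x hx
    have hpd : DifferentiableAt ℝ p x := (hp x hx).differentiableAt
    have hqd : DifferentiableAt ℝ q x := (hq x hx).differentiableAt
    have h1 : deriv f x = (h : ℝ) * p x ^ (h - 1) * deriv p x := deriv_fun_pow hpd h
    have h2 : deriv g x = (k : ℝ) * q x ^ (k - 1) * deriv q x := deriv_fun_pow hqd k
    have hph : p x ^ h = p x ^ (h - 1) * p x := by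
      rw [← pow_succ]; congr 1; omega
    have hqk : q x ^ k = q x ^ (k - 1) * q x := by
      rw [← pow_succ]; congr 1; omega
    calc deriv f x * g x - f x * deriv g x
        = (h : ℝ) * p x ^ (h - 1) * deriv p x * (q x ^ (k - 1) * q x)
          - p x ^ (h - 1) * p x * ((k : ℝ) * q x ^ (k - 1) * deriv q x) := by
          rw [h1, h2]; simp only [hfdef, hgdef]; rw [hph, hqk]
      _ = p x ^ (h - 1) * q x ^ (k - 1)
          * ((h : ℝ) * deriv p x * q x - (k : ℝ) * deriv q x * p x) := by ring
      _ = 0 := by rw [heq x hx, mul_zero]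
  -- find a ball around x₀ inside I where q ≠ 0
  have hcont : ContinuousAt q x₀ := (hq x₀ hx₀I).continuousAt
  have hev : ∀ᶠ x in nhds x₀, q x ≠ 0 ∧ x ∈ I :=
    (hcont.eventually_ne hqx₀).and (hIopen.mem_nhds hx₀I)
  obtain ⟨ε, hε, hball⟩ := Metric.eventually_nhds_iff.mp hev
  set B := Metric.ball x₀ ε with hBdef
  have hB : ∀ x ∈ B, q x ≠ 0 ∧ x ∈ I := fun x hx => hball (Metric.mem_ball.mp hx)
  have hx₀B : x₀ ∈ B := Metric.mem_ball_self hε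
  -- f/g is constant on B
  set φ : ℝ → ℝ := fun x => f x / g x with hφdef
  have hφconst : ∀ x ∈ B, φ x = φ x₀ := by
    intro x hx
    refine (convex_ball x₀ ε).is_const_of_fderivWithin_eq_zero (𝕜 := ℝ) (f := φ) ?_ ?_ hx hx₀B
    · intro y hy
      obtain ⟨hqy, hyI⟩ := hB y hy
      have hgy : g y ≠ 0 := pow_ne_zero _ hqy
      exact (((hfA y hyI).differentiableAt).div ((hgA y hyI).differentiableAt)
        hgy).differentiableWithinAt
    · intro y hy
      obtain ⟨hqy, hyI⟩ := hB y hy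
      have hgy : g y ≠ 0 := pow_ne_zero _ hqy
      have hdf := ((hfA y hyI).differentiableAt).hasDerivAt
      have hdg := ((hgA y hyI).differentiableAt).hasDerivAt
      have hdiv : HasDerivAt φ ((deriv f y * g y - f y * deriv g y) / g y ^ 2) y :=
        hdf.div hdg hgy
      rw [hW y hyI, zero_div] at hdiv
      rw [fderivWithin_of_isOpen Metric.isOpen_ball hy, hdiv.hasFDerivAt.fderiv]
      ext
      simp
  set c : ℝ := φ x₀ with hcdef
  -- f - c • g vanishes on B, hence on I by analyticity
  have hBzero : ∀ x ∈ B, f x - c * g x = 0 := by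
    intro x hx
    obtain ⟨hqx, hxI⟩ := hB x hx
    have hgx : g x ≠ 0 := pow_ne_zero _ hqx
    have hxc : φ x = c := hφconst x hx
    simp only [hφdef] at hxc
    rw [div_eq_iff hgx] at hxc
    rw [sub_eq_zero, hxc]
  have hFA : AnalyticOnNhd ℝ (fun x => f x - c * g x) I := fun x hx =>
    ((hfA x hx).sub (analyticAt_const.mul (hgA x hx)))
  have hIz : ∀ x ∈ I, f x - c * g x = 0 := by
    have : EqOn (fun x => f x - c * g x) 0 I := by
      apply hFA.eqOn_zero_of_preconnected_of_eventuallyEq_zero hIconn hx₀I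
      filter_upwards [Metric.ball_mem_nhds x₀ hε] with x hx
      exact hBzero x hx
    intro x hx; exact this hx
  -- c ≠ 0 since p is not identically zero
  obtain ⟨x₁, hx₁I, hpx₁⟩ := hp0
  have hc : c ≠ 0 := by
    intro hc0
    have := hIz x₁ hx₁I
    rw [hc0, zero_mul, sub_zero] at this
    exact pow_ne_zero h hpx₁ this
  refine ⟨1, -c, by simpa using hc, fun x hx => ?_⟩
  have := hIz x hx
  simp only [hfdef, hgdef] at this
  linarith
end

section
/- Let I ⊆ ℝ be an open interval, h, l positive integers, and p, q real analytic on I, neither vanishing identically on I, with h p'(x) q(x) − h l q'(x) p(x) = 0 for all x ∈ I. Then there exists a nonzero constant c_l ∈ ℝ such that p(x) = c_l · q(x)^l for all x ∈ I. -/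
open Set

/-- Lemma 2 (iii). Let `I ⊆ ℝ` be an open interval, `h, l` positive
integers, and `p, q` real analytic on `I`, neither vanishing identically on `I`, with
`h p'(x) q(x) − h l q'(x) p(x) = 0` on `I`. Then there exists a nonzero constant `c_l`
such that `p(x) = c_l * q(x)^l` for all `x ∈ I`. -/
theorem analytic_power_proportionality
    (I : Set ℝ) (hIopen : IsOpen I) (hIconn : IsPreconnected I)
    (h l : ℕ) (hh : 0 < h) (hl : 0 < l)
    (p q : ℝ → ℝ) (hp : AnalyticOnNhd ℝ p I) (hq : AnalyticOnNhd ℝ q I)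
    (heq : ∀ x ∈ I, (h : ℝ) * deriv p x * q x - (h : ℝ) * (l : ℝ) * deriv q x * p x = 0)
    (hp0 : ∃ x ∈ I, p x ≠ 0) (hq0 : ∃ x ∈ I, q x ≠ 0) :
    ∃ cl : ℝ, cl ≠ 0 ∧ ∀ x ∈ I, p x = cl * q x ^ l := by
  obtain ⟨x0, hx0, hqx0⟩ := hq0
  set c : ℝ := p x0 / q x0 ^ l with hc
  set φ : ℝ → ℝ := fun x => p x / q x ^ l with hφ
  have hhne : (h : ℝ) ≠ 0 := Nat.cast_ne_zero.mpr hh.ne'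
  -- an open set around x0 where q ≠ 0, inside I
  have hVopen : IsOpen (I ∩ q ⁻¹' {0}ᶜ) :=
    hq.continuousOn.isOpen_inter_preimage hIopen isOpen_compl_singleton
  have hx0V : x0 ∈ I ∩ q ⁻¹' {0}ᶜ := ⟨hx0, hqx0⟩
  obtain ⟨ε, hε, hball⟩ := Metric.isOpen_iff.mp hVopen x0 hx0V
  -- φ has zero derivative on the ball
  have hderiv : ∀ x ∈ Metric.ball x0 ε, HasDerivAt φ 0 x := by
    intro x hx
    obtain ⟨hxI, hqx⟩ := hball hx
    have hqx : q x ≠ 0 := hqx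
    have hp' : HasDerivAt p (deriv p x) x := (hp x hxI).differentiableAt.hasDerivAt
    have hq' : HasDerivAt q (deriv q x) x := (hq x hxI).differentiableAt.hasDerivAt
    have hqpow : HasDerivAt (fun y => q y ^ l)
        ((l : ℝ) * q x ^ (l - 1) * deriv q x) x := hq'.pow l
    have key : deriv p x * q x - (l : ℝ) * deriv q x * p x = 0 := by
      have h0 := heq x hxI
      have h2 : (h : ℝ) * (deriv p x * q x - (l : ℝ) * deriv q x * p x)
          = (h : ℝ) * deriv p x * q x - (h : ℝ) * (l : ℝ) * deriv q x * p x := by ring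
      exact (mul_eq_zero.mp (by rw [h2]; exact h0)).resolve_left hhne
    have hnum : deriv p x * q x ^ l - p x * ((l : ℝ) * q x ^ (l - 1) * deriv q x) = 0 := by
      have hql : q x ^ l = q x ^ (l - 1) * q x := by
        rw [← pow_succ, Nat.sub_add_cancel hl]
      rw [hql]
      linear_combination (q x ^ (l - 1)) * key
    have hdiv := hp'.div hqpow (pow_ne_zero l hqx)
    rw [hnum, zero_div] at hdiv
    exact hdiv
  -- hence φ is constant on the ball, so p = c * q^l near x0
  have hconst : ∀ x ∈ Metric.ball x0 ε, φ x = φ x0 := by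
    intro x hx
    refine (convex_ball x0 ε).is_const_of_fderivWithin_eq_zero
      (fun y hy => (hderiv y hy).differentiableAt.differentiableWithinAt)
      (fun y hy => ?_) hx (Metric.mem_ball_self hε)
    rw [fderivWithin_of_isOpen Metric.isOpen_ball hy, (hderiv y hy).hasFDerivAt.fderiv]
    ext
    simp
  have hev : p =ᶠ[nhds x0] fun x => c * q x ^ l := by
    filter_upwards [Metric.ball_mem_nhds x0 hε] with x hx
    have hqx : q x ≠ 0 := (hball hx).2
    have := hconst x hx
    have hpx : p x = φ x * q x ^ l := by
      rw [hφ]; field_simp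
    rw [hpx, this]
  -- identity theorem
  have hg : AnalyticOnNhd ℝ (fun x => c * q x ^ l) I :=
    fun x hx => analyticAt_const.mul ((hq x hx).pow l)
  have heqOn : EqOn p (fun x => c * q x ^ l) I :=
    hp.eqOn_of_preconnected_of_eventuallyEq hg hIconn hx0 hev
  have hc0 : c ≠ 0 := by
    intro hc0
    obtain ⟨x1, hx1, hp1⟩ := hp0
    exact hp1 (by simpa [hc0] using heqOn hx1)
  exact ⟨c, hc0, fun x hx => heqOn hx⟩
end

section
/- Let F(x,y) = (p₁(x) y + p₀(x), Q(x,y)) be a C¹ non-singular map on the strip Σ = I × ℝ, where p₀, p₁ ∈ C¹(I,ℝ). If p₁(x) ≠ 0 for all x ∈ I, then F is injective on Σ. -/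
open Set

/-- A continuous linear map on `ℝ × ℝ` with nonzero determinant is injective on nonzero
vectors. -/
lemma aux_det_ne_zero_apply_ne_zero (L : ℝ × ℝ →L[ℝ] ℝ × ℝ) (h : L.det ≠ 0)
    {w : ℝ × ℝ} (hw : w ≠ 0) : L w ≠ 0 := by
  have hdet : LinearMap.det (L : ℝ × ℝ →ₗ[ℝ] ℝ × ℝ) ≠ 0 := h
  have hinj : Function.Injective (L : ℝ × ℝ →ₗ[ℝ] ℝ × ℝ) := by
    have := (LinearMap.equivOfDetNeZero (L : ℝ × ℝ →ₗ[ℝ] ℝ × ℝ) hdet).injective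
    rwa [show ⇑(LinearMap.equivOfDetNeZero (L : ℝ × ℝ →ₗ[ℝ] ℝ × ℝ) hdet)
      = ⇑(L : ℝ × ℝ →ₗ[ℝ] ℝ × ℝ) from rfl] at this
  intro h0
  exact hw (hinj (by simpa using h0))

/-- Lemma 3 (ii). Let `F(x,y) = (p₁(x) y + p₀(x), Q(x,y))` be a `C¹`
non-singular map on the strip `Σ = I × ℝ`. If `p₁(x) ≠ 0` for all `x ∈ I`, then `F` is
injective on `Σ`. -/
theorem first_component_affine_nonvanishing_injective
    (I : Set ℝ) (hIopen : IsOpen I) (hIconn : IsPreconnected I)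
    (p₀ p₁ : ℝ → ℝ) (Q : ℝ × ℝ → ℝ)
    (hp₀ : ContDiffOn ℝ 1 p₀ I) (hp₁ : ContDiffOn ℝ 1 p₁ I)
    (hQ : ContDiffOn ℝ 1 Q (I ×ˢ (univ : Set ℝ)))
    (F : ℝ × ℝ → ℝ × ℝ)
    (hFdef : ∀ x y : ℝ, F (x, y) = (p₁ x * y + p₀ x, Q (x, y)))
    (hns : ∀ z ∈ I ×ˢ (univ : Set ℝ), (fderiv ℝ F z).det ≠ 0)
    (hp₁0 : ∀ x ∈ I, p₁ x ≠ 0) :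
    Set.InjOn F (I ×ˢ (univ : Set ℝ)) := by
  have hSopen : IsOpen (I ×ˢ (univ : Set ℝ)) := hIopen.prod isOpen_univ
  -- differentiability of the data
  have hp₀d : ∀ x ∈ I, DifferentiableAt ℝ p₀ x := fun x hx =>
    ((hp₀.differentiableOn one_ne_zero).differentiableAt (hIopen.mem_nhds hx))
  have hp₁d : ∀ x ∈ I, DifferentiableAt ℝ p₁ x := fun x hx =>
    ((hp₁.differentiableOn one_ne_zero).differentiableAt (hIopen.mem_nhds hx))
  have hQd : ∀ z ∈ I ×ˢ (univ : Set ℝ), DifferentiableAt ℝ Q z := fun z hz =>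
    ((hQ.differentiableOn one_ne_zero).differentiableAt (hSopen.mem_nhds hz))
  have hFeqfun : F = fun z : ℝ × ℝ => (p₁ z.1 * z.2 + p₀ z.1, Q z) := by
    funext z; obtain ⟨x, y⟩ := z; exact hFdef x y
  have hFd : ∀ z ∈ I ×ˢ (univ : Set ℝ), DifferentiableAt ℝ F z := by
    intro z hz
    rw [hFeqfun]
    have h1 : z.1 ∈ I := hz.1
    exact DifferentiableAt.prodMk
      ((((hp₁d z.1 h1).comp z differentiableAt_fst).mul differentiableAt_snd).add
        ((hp₀d z.1 h1).comp z differentiableAt_fst))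
      (hQd z hz)
  rintro ⟨x₁, y₁⟩ hz₁ ⟨x₂, y₂⟩ hz₂ hFF
  have hx₁ : x₁ ∈ I := hz₁.1
  have hx₂ : x₂ ∈ I := hz₂.1
  rw [hFdef, hFdef, Prod.mk.injEq] at hFF
  obtain ⟨h1, h2⟩ := hFF
  by_cases hx : x₁ = x₂
  · subst hx
    have hy : y₁ = y₂ := by
      have hne := hp₁0 x₁ hx₁
      have : p₁ x₁ * y₁ = p₁ x₁ * y₂ := by linarith
      exact mul_left_cancel₀ hne this
    rw [hy]
  · exfalso
    set c : ℝ := p₁ x₁ * y₁ + p₀ x₁ with hc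
    set yc : ℝ → ℝ := fun x => (c - p₀ x) / p₁ x with hyc
    have hycI : ∀ x ∈ I, p₁ x * yc x + p₀ x = c := by
      intro x hx'
      have := hp₁0 x hx'
      simp only [hyc]
      field_simp
      ring
    have hy₁ : yc x₁ = y₁ := by
      have := hp₁0 x₁ hx₁
      simp only [hyc, hc]
      field_simp
      ring
    have hy₂ : yc x₂ = y₂ := by
      have := hp₁0 x₂ hx₂
      simp only [hyc]
      field_simp
      linarith
    set g : ℝ → ℝ := fun x => Q (x, yc x) with hg
    -- key: g is differentiable with nonvanishing derivative on I
    have key : ∀ x ∈ I, HasDerivAt g (deriv g x) x ∧ deriv g x ≠ 0 := by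
      intro x hx'
      have hzI : ((x, yc x) : ℝ × ℝ) ∈ I ×ˢ (univ : Set ℝ) := ⟨hx', mem_univ _⟩
      have hp₁ne := hp₁0 x hx'
      -- derivative of yc
      have hycd : HasDerivAt yc
          (((-deriv p₀ x) * p₁ x - (c - p₀ x) * deriv p₁ x) / (p₁ x) ^ 2) x := by
        have h₀ : HasDerivAt (fun x => c - p₀ x) (-deriv p₀ x) x := by
          exact ((hasDerivAt_const x c).sub (hp₀d x hx').hasDerivAt).congr_deriv (zero_sub _)
        exact h₀.div (hp₁d x hx').hasDerivAt hp₁ne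
      set y' : ℝ := ((-deriv p₀ x) * p₁ x - (c - p₀ x) * deriv p₁ x) / (p₁ x) ^ 2
      have hk : HasDerivAt (fun x => ((x, yc x) : ℝ × ℝ)) (1, y') x :=
        (hasDerivAt_id x).prodMk hycd
      have hL : HasFDerivAt F (fderiv ℝ F (x, yc x)) (x, yc x) :=
        (hFd _ hzI).hasFDerivAt
      set v : ℝ × ℝ := fderiv ℝ F (x, yc x) (1, y') with hv
      have hcomp : HasDerivAt (fun x => F (x, yc x)) v x := by
        exact hL.comp_hasDerivAt x hk
      -- on I, F (x, yc x) = (c, g x)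
      have heq : (fun x => F (x, yc x)) =ᶠ[nhds x] fun x => ((c, g x) : ℝ × ℝ) := by
        filter_upwards [hIopen.mem_nhds hx'] with x' hx''
        rw [hFdef]
        simp [hycI x' hx'', hg]
      have hcomp' : HasDerivAt (fun x => ((c, g x) : ℝ × ℝ)) v x :=
        hcomp.congr_of_eventuallyEq heq.symm
      have hfst : HasDerivAt (fun _ : ℝ => c) v.1 x := by
        have := (ContinuousLinearMap.fst ℝ ℝ ℝ).hasFDerivAt.comp_hasDerivAt x hcomp'
        exact this
      have hsnd : HasDerivAt g v.2 x := by
        have := (ContinuousLinearMap.snd ℝ ℝ ℝ).hasFDerivAt.comp_hasDerivAt x hcomp'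
        exact this
      have hv1 : v.1 = 0 := hfst.unique (hasDerivAt_const x c)
      have hvne : v ≠ 0 := by
        apply aux_det_ne_zero_apply_ne_zero _ (hns _ hzI)
        intro h0
        have : (1 : ℝ) = 0 := congrArg Prod.fst h0
        norm_num at this
      have hv2 : v.2 ≠ 0 := by
        intro h0
        exact hvne (Prod.ext hv1 h0)
      refine ⟨?_, ?_⟩
      · rw [hsnd.deriv]; exact hsnd
      · rw [hsnd.deriv]; exact hv2
    -- g takes equal values at x₁ and x₂
    have hgeq : g x₁ = g x₂ := by
      simp only [hg, hy₁, hy₂]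
      exact h2
    -- I is order-connected
    have hord : OrdConnected I := hIconn.ordConnected
    -- Rolle-style contradiction for a < b
    have main : ∀ a b : ℝ, a ∈ I → b ∈ I → a < b → g a = g b → False := by
      intro a b ha hb hab hgab
      have hIcc : Icc a b ⊆ I := hord.out ha hb
      have hcont : ContinuousOn g (Icc a b) := fun t ht =>
        ((key t (hIcc ht)).1.differentiableAt.continuousAt).continuousWithinAt
      obtain ⟨t, ht, ht0⟩ := exists_hasDerivAt_eq_zero hab hcont hgab
        (fun t ht => (key t (hIcc (Ioo_subset_Icc_self ht))).1)
      exact (key t (hIcc (Ioo_subset_Icc_self ht))).2 ht0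
    rcases lt_or_gt_of_ne hx with h | h
    · exact main x₁ x₂ hx₁ hx₂ h hgeq
    · exact main x₂ x₁ hx₂ hx₁ h hgeq.symm
end

section
/- Let F(x,y) = (p₁(x) y + p₀(x), Q(x,y)) be a C² non-singular map on the strip Σ = I × ℝ, where p₀, p₁ ∈ C²(I,ℝ). Then p₁ has no simple zeroes in I; that is, if p₁(x₀) = 0 for some x₀ ∈ I, then also p₁'(x₀) = 0. -/
open Set

/-- Lemma 3 (iii). Let `F(x,y) = (p₁(x) y + p₀(x), Q(x,y))` be a `C²`
non-singular map on the strip `Σ = I × ℝ`. Then `p₁` has no simple zeroes in `I`: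
if `p₁(x₀) = 0` for some `x₀ ∈ I`, then `p₁'(x₀) = 0`. -/
theorem first_component_affine_no_simple_zero
    (I : Set ℝ) (hIopen : IsOpen I) (hIconn : IsPreconnected I)
    (p₀ p₁ : ℝ → ℝ) (Q : ℝ × ℝ → ℝ)
    (hp₀ : ContDiffOn ℝ 2 p₀ I) (hp₁ : ContDiffOn ℝ 2 p₁ I)
    (hQ : ContDiffOn ℝ 2 Q (I ×ˢ (univ : Set ℝ)))
    (F : ℝ × ℝ → ℝ × ℝ)
    (hFdef : ∀ x y : ℝ, F (x, y) = (p₁ x * y + p₀ x, Q (x, y)))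
    (hns : ∀ z ∈ I ×ˢ (univ : Set ℝ), (fderiv ℝ F z).det ≠ 0) :
    ∀ x₀ ∈ I, p₁ x₀ = 0 → deriv p₁ x₀ = 0 := by
  intro x₀ hx₀ hzero
  by_contra ha
  set a := deriv p₁ x₀ with ha_def
  set b := deriv p₀ x₀ with hb_def
  set y₀ : ℝ := -b / a with hy₀_def
  set z₀ : ℝ × ℝ := (x₀, y₀) with hz₀_def
  have hz₀mem : z₀ ∈ I ×ˢ (univ : Set ℝ) := ⟨hx₀, trivial⟩
  have hopen : IsOpen (I ×ˢ (univ : Set ℝ)) := hIopen.prod isOpen_univ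
  -- derivatives of p₀, p₁ at x₀
  have hd₁ : HasDerivAt p₁ a x₀ :=
    ((hp₁.contDiffAt (hIopen.mem_nhds hx₀)).differentiableAt (by norm_num)).hasDerivAt
  have hd₀ : HasDerivAt p₀ b x₀ :=
    ((hp₀.contDiffAt (hIopen.mem_nhds hx₀)).differentiableAt (by norm_num)).hasDerivAt
  -- derivative of the first component at z₀
  have hfst : HasFDerivAt (Prod.fst : ℝ × ℝ → ℝ) (ContinuousLinearMap.fst ℝ ℝ ℝ) z₀ :=
    hasFDerivAt_fst
  have h1 : HasFDerivAt (fun z : ℝ × ℝ => p₁ z.1)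
      (((1 : ℝ →L[ℝ] ℝ).smulRight a).comp (ContinuousLinearMap.fst ℝ ℝ ℝ)) z₀ :=
    hd₁.hasFDerivAt.comp z₀ hfst
  have h0 : HasFDerivAt (fun z : ℝ × ℝ => p₀ z.1)
      (((1 : ℝ →L[ℝ] ℝ).smulRight b).comp (ContinuousLinearMap.fst ℝ ℝ ℝ)) z₀ :=
    hd₀.hasFDerivAt.comp z₀ hfst
  have hsnd : HasFDerivAt (fun z : ℝ × ℝ => z.2) (ContinuousLinearMap.snd ℝ ℝ ℝ) z₀ :=
    hasFDerivAt_snd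
  have hmul := h1.mul hsnd
  have hP := hmul.add h0
  -- the derivative of the first component is the zero map
  have hLP : (p₁ z₀.1 • ContinuousLinearMap.snd ℝ ℝ ℝ +
      z₀.2 • ((1 : ℝ →L[ℝ] ℝ).smulRight a).comp (ContinuousLinearMap.fst ℝ ℝ ℝ) +
      ((1 : ℝ →L[ℝ] ℝ).smulRight b).comp (ContinuousLinearMap.fst ℝ ℝ ℝ)) =
      (0 : ℝ × ℝ →L[ℝ] ℝ) := by
    refine ContinuousLinearMap.ext fun v => ?_
    simp only [ContinuousLinearMap.add_apply, ContinuousLinearMap.smul_apply,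
      ContinuousLinearMap.coe_comp', Function.comp_apply, ContinuousLinearMap.coe_fst',
      ContinuousLinearMap.coe_snd', ContinuousLinearMap.smulRight_apply,
      ContinuousLinearMap.one_apply, ContinuousLinearMap.zero_apply, hz₀_def, hzero,
      smul_eq_mul, hy₀_def]
    field_simp
    ring
  have hP0 : HasFDerivAt (fun z : ℝ × ℝ => p₁ z.1 * z.2 + p₀ z.1) (0 : ℝ × ℝ →L[ℝ] ℝ) z₀ := by
    rw [← hLP]; exact hP
  -- derivative of Q at z₀
  have hQd : DifferentiableAt ℝ Q z₀ :=
    (hQ.contDiffAt (hopen.mem_nhds hz₀mem)).differentiableAt (by norm_num)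
  -- F equals the explicit formula
  have hFeq : F = fun z : ℝ × ℝ => (p₁ z.1 * z.2 + p₀ z.1, Q z) := by
    funext z
    rw [← Prod.mk.eta (p := z), hFdef]
  have hFd : HasFDerivAt F ((0 : ℝ × ℝ →L[ℝ] ℝ).prod (fderiv ℝ Q z₀)) z₀ := by
    rw [hFeq]
    exact HasFDerivAt.prodMk hP0 hQd.hasFDerivAt
  have hfd : fderiv ℝ F z₀ = (0 : ℝ × ℝ →L[ℝ] ℝ).prod (fderiv ℝ Q z₀) := hFd.fderiv
  have hdet := hns z₀ hz₀mem
  rw [hfd] at hdet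
  -- derive a contradiction: the map is not surjective
  set L := (0 : ℝ × ℝ →L[ℝ] ℝ).prod (fderiv ℝ Q z₀) with hL_def
  have hdet' : LinearMap.det (L : ℝ × ℝ →ₗ[ℝ] ℝ × ℝ) ≠ 0 := hdet
  have hsurj : Function.Surjective (L : ℝ × ℝ →ₗ[ℝ] ℝ × ℝ) := by
    intro w
    refine ⟨(LinearMap.equivOfDetNeZero _ hdet').symm w, ?_⟩
    have h := (LinearMap.equivOfDetNeZero _ hdet').apply_symm_apply w
    rwa [LinearEquiv.ofIsUnitDet_apply] at h
  obtain ⟨v, hv⟩ := hsurj (1, 0)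
  have hLv : L v = (1, 0) := hv
  have h := congrArg Prod.fst hLv
  simp [hL_def] at h
end

section
/- Let F(x,y) = (p_m(x) yᵐ + p₁(x) y + p₀(x), q_m(x) yᵐ + q₁(x) y + q₀(x)) be a real analytic non-singular map on the strip Σ = I × ℝ, with integer m > 1 and with neither p_m nor q_m vanishing identically on I. If d_{1m}(x) := p₁(x) q_m(x) − q₁(x) p_m(x) ≠ 0 for all x ∈ I, then F is injective on Σ. -/
open Set Polynomial

private lemma clm_det_two (T : (ℝ × ℝ) →L[ℝ] (ℝ × ℝ)) :
    T.det = (T (1,0)).1 * (T (0,1)).2 - (T (0,1)).1 * (T (1,0)).2 := by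
  have h := LinearMap.det_toMatrix (Module.Basis.finTwoProd ℝ) (T : (ℝ × ℝ) →ₗ[ℝ] (ℝ × ℝ))
  rw [ContinuousLinearMap.det, ← h, Matrix.det_fin_two]
  simp [LinearMap.toMatrix_apply, Module.Basis.finTwoProd_zero, Module.Basis.finTwoProd_one,
    Module.Basis.coe_finTwoProd_repr]

private lemma odd_natDegree_exists_root (P : Polynomial ℝ) (h : Odd P.natDegree) :
    ∃ x : ℝ, P.eval x = 0 := by
  have hne : P ≠ 0 := by
    intro h0
    rw [h0] at h
    simp at h
  suffices H : ∀ Q : Polynomial ℝ, Odd Q.natDegree → 0 < Q.leadingCoeff → ∃ x, Q.eval x = 0 by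
    rcases lt_trichotomy 0 P.leadingCoeff with hl | hl | hl
    · exact H P h hl
    · exact absurd hl.symm (Polynomial.leadingCoeff_ne_zero.mpr hne)
    · obtain ⟨x, hx⟩ := H (-P) (by simpa using h) (by simpa using hl)
      exact ⟨x, by simpa using hx⟩
  intro Q hQ hQl
  have hQdeg : 0 < Q.degree := by
    rw [← Polynomial.natDegree_pos_iff_degree_pos]; exact hQ.pos
  have htop : Filter.Tendsto (fun x => Q.eval x) Filter.atTop Filter.atTop :=
    Q.tendsto_atTop_of_leadingCoeff_nonneg hQdeg hQl.le
  set R := Q.comp (-X) with hR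
  have hRdeg : R.natDegree = Q.natDegree := by
    rw [hR, Polynomial.natDegree_comp]
    simp
  have hRlead : R.leadingCoeff = -Q.leadingCoeff := by
    rw [hR, Polynomial.leadingCoeff_comp (by simp)]
    rcases hQ with ⟨k, hk⟩
    simp [hk, pow_add, pow_mul]
  have hRdeg' : 0 < R.degree := by
    rw [← Polynomial.natDegree_pos_iff_degree_pos, hRdeg]; exact hQ.pos
  have hbot : Filter.Tendsto (fun x => R.eval x) Filter.atTop Filter.atBot :=
    R.tendsto_atBot_of_leadingCoeff_nonpos hRdeg' (by rw [hRlead]; linarith)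
  obtain ⟨b, hb⟩ := (htop.eventually_ge_atTop 1).exists
  obtain ⟨a, ha⟩ := (hbot.eventually_le_atBot (-1)).exists
  have ha' : Q.eval (-a) ≤ -1 := by
    have h2 : R.eval a = Q.eval (-a) := by simp [hR]
    linarith [h2.symm.le, h2.le]
  have hcont : ContinuousOn (fun x => Q.eval x) (uIcc (-a) b) :=
    (Polynomial.continuous_aeval Q).continuousOn
  have h0 : (0 : ℝ) ∈ uIcc (Q.eval (-a)) (Q.eval b) := by
    rw [Set.mem_uIcc]
    left; constructor <;> linarith
  obtain ⟨x, _, hx⟩ := intermediate_value_uIcc hcont h0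
  exact ⟨x, hx⟩

private lemma hasFDerivAt_poly_map (p₀ p₁ pm q₀ q₁ qm : ℝ → ℝ) (m : ℕ) (x y : ℝ)
    (h0 : DifferentiableAt ℝ p₀ x) (h1 : DifferentiableAt ℝ p₁ x)
    (hm : DifferentiableAt ℝ pm x) (k0 : DifferentiableAt ℝ q₀ x)
    (k1 : DifferentiableAt ℝ q₁ x) (km : DifferentiableAt ℝ qm x) :
    HasFDerivAt (fun z : ℝ × ℝ =>
        (pm z.1 * z.2 ^ m + p₁ z.1 * z.2 + p₀ z.1,
         qm z.1 * z.2 ^ m + q₁ z.1 * z.2 + q₀ z.1))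
      ((ContinuousLinearMap.fst ℝ ℝ ℝ).smulRight
          (deriv pm x * y ^ m + deriv p₁ x * y + deriv p₀ x,
           deriv qm x * y ^ m + deriv q₁ x * y + deriv q₀ x) +
        (ContinuousLinearMap.snd ℝ ℝ ℝ).smulRight
          ((m : ℝ) * pm x * y ^ (m - 1) + p₁ x,
           (m : ℝ) * qm x * y ^ (m - 1) + q₁ x)) (x, y) := by
  have hfst : HasFDerivAt (fun z : ℝ × ℝ => z.1) (ContinuousLinearMap.fst ℝ ℝ ℝ) (x, y) :=
    hasFDerivAt_fst
  have hsnd : HasFDerivAt (fun z : ℝ × ℝ => z.2) (ContinuousLinearMap.snd ℝ ℝ ℝ) (x, y) :=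
    hasFDerivAt_snd
  have hpow : HasFDerivAt (fun z : ℝ × ℝ => z.2 ^ m)
      (((m : ℝ) * y ^ (m - 1)) • (ContinuousLinearMap.snd ℝ ℝ ℝ)) (x, y) :=
    (hasDerivAt_pow m y).comp_hasFDerivAt _ hsnd
  have comp1 : ∀ (f : ℝ → ℝ), DifferentiableAt ℝ f x →
      HasFDerivAt (fun z : ℝ × ℝ => f z.1) ((deriv f x) • (ContinuousLinearMap.fst ℝ ℝ ℝ)) (x, y) :=
    fun f hf => (hf.hasDerivAt).comp_hasFDerivAt _ hfst
  have H1 : HasFDerivAt (fun z : ℝ × ℝ =>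
      pm z.1 * z.2 ^ m + p₁ z.1 * z.2 + p₀ z.1)
      ((pm x • (((m : ℝ) * y ^ (m - 1)) • (ContinuousLinearMap.snd ℝ ℝ ℝ)) +
          (y ^ m) • ((deriv pm x) • (ContinuousLinearMap.fst ℝ ℝ ℝ))) +
        (p₁ x • (ContinuousLinearMap.snd ℝ ℝ ℝ) +
          y • ((deriv p₁ x) • (ContinuousLinearMap.fst ℝ ℝ ℝ))) +
        (deriv p₀ x) • (ContinuousLinearMap.fst ℝ ℝ ℝ)) (x, y) :=
    (((comp1 pm hm).mul hpow).add ((comp1 p₁ h1).mul hsnd)).add (comp1 p₀ h0)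
  have H2 : HasFDerivAt (fun z : ℝ × ℝ =>
      qm z.1 * z.2 ^ m + q₁ z.1 * z.2 + q₀ z.1)
      ((qm x • (((m : ℝ) * y ^ (m - 1)) • (ContinuousLinearMap.snd ℝ ℝ ℝ)) +
          (y ^ m) • ((deriv qm x) • (ContinuousLinearMap.fst ℝ ℝ ℝ))) +
        (q₁ x • (ContinuousLinearMap.snd ℝ ℝ ℝ) +
          y • ((deriv q₁ x) • (ContinuousLinearMap.fst ℝ ℝ ℝ))) +
        (deriv q₀ x) • (ContinuousLinearMap.fst ℝ ℝ ℝ)) (x, y) :=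
    (((comp1 qm km).mul hpow).add ((comp1 q₁ k1).mul hsnd)).add (comp1 q₀ k0)
  have := H1.prodMk H2
  refine this.congr_fderiv (Eq.symm ?_)
  apply ContinuousLinearMap.ext
  intro v
  simp [ContinuousLinearMap.smulRight_apply, Prod.ext_iff]
  constructor <;> ring

private lemma const_on_ball {f : ℝ → ℝ} {x₀ ε : ℝ} (hε : 0 < ε)
    (hf : ∀ x ∈ Metric.ball x₀ ε, HasDerivAt f 0 x) :
    ∀ x ∈ Metric.ball x₀ ε, f x = f x₀ := by
  intro x hx
  refine (convex_ball x₀ ε).is_const_of_fderivWithin_eq_zero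
    (fun y hy => ((hf y hy).differentiableAt).differentiableWithinAt)
    (fun y hy => ?_) hx (Metric.mem_ball_self hε)
  rw [fderivWithin_of_isOpen Metric.isOpen_ball hy, ((hf y hy).hasFDerivAt).fderiv]
  ext v
  simp

/-- Theorem 2. If `d₁ₘ(x) = p₁ qₘ − q₁ pₘ ≠ 0` on `I`, then the analytic non-singular map `F` is injective on `Σ`. -/
theorem theorem2_i_injective
    (I : Set ℝ) (hIopen : IsOpen I) (hIconn : IsPreconnected I)
    (m : ℕ) (hm : 1 < m)
    (p₀ p₁ pm q₀ q₁ qm : ℝ → ℝ)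
    (hp₀ : AnalyticOnNhd ℝ p₀ I) (hp₁ : AnalyticOnNhd ℝ p₁ I) (hpm : AnalyticOnNhd ℝ pm I)
    (hq₀ : AnalyticOnNhd ℝ q₀ I) (hq₁ : AnalyticOnNhd ℝ q₁ I) (hqm : AnalyticOnNhd ℝ qm I)
    (hpm0 : ∃ x ∈ I, pm x ≠ 0) (hqm0 : ∃ x ∈ I, qm x ≠ 0)
    (F : ℝ × ℝ → ℝ × ℝ)
    (hFdef : ∀ x y : ℝ,
      F (x, y) = (pm x * y ^ m + p₁ x * y + p₀ x, qm x * y ^ m + q₁ x * y + q₀ x))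
    (hns : ∀ z ∈ I ×ˢ (univ : Set ℝ), (fderiv ℝ F z).det ≠ 0)
    (hd : ∀ x ∈ I, p₁ x * qm x - q₁ x * pm x ≠ 0) :
    Set.InjOn F (I ×ˢ (univ : Set ℝ)) := by
  obtain ⟨n, rfl⟩ : ∃ n, m = n + 2 := ⟨m - 2, by omega⟩
  have hF : F = fun z : ℝ × ℝ =>
      (pm z.1 * z.2 ^ (n+2) + p₁ z.1 * z.2 + p₀ z.1,
       qm z.1 * z.2 ^ (n+2) + q₁ z.1 * z.2 + q₀ z.1) := by
    funext z
    obtain ⟨zx, zy⟩ := z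
    exact hFdef zx zy
  set Av : ℝ → ℝ → ℝ := fun x y => deriv pm x * y ^ (n+2) + deriv p₁ x * y + deriv p₀ x with hAv
  set Bv : ℝ → ℝ → ℝ := fun x y => ((n+2 : ℕ) : ℝ) * pm x * y ^ (n+1) + p₁ x with hBv
  set Cv : ℝ → ℝ → ℝ := fun x y => deriv qm x * y ^ (n+2) + deriv q₁ x * y + deriv q₀ x with hCv
  set Dv : ℝ → ℝ → ℝ := fun x y => ((n+2 : ℕ) : ℝ) * qm x * y ^ (n+1) + q₁ x with hDv
  set L : ℝ → ℝ → ((ℝ × ℝ) →L[ℝ] (ℝ × ℝ)) := fun x y =>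
    (ContinuousLinearMap.fst ℝ ℝ ℝ).smulRight (Av x y, Cv x y) +
      (ContinuousLinearMap.snd ℝ ℝ ℝ).smulRight (Bv x y, Dv x y) with hL
  have hLder : ∀ x ∈ I, ∀ y : ℝ, HasFDerivAt F (L x y) (x, y) := by
    intro x hx y
    rw [hF]
    exact hasFDerivAt_poly_map p₀ p₁ pm q₀ q₁ qm (n+2) x y
      (hp₀ x hx).differentiableAt (hp₁ x hx).differentiableAt (hpm x hx).differentiableAt
      (hq₀ x hx).differentiableAt (hq₁ x hx).differentiableAt (hqm x hx).differentiableAt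
  have hLapp1 : ∀ x y : ℝ, L x y (1, 0) = (Av x y, Cv x y) := by
    intro x y; simp [hL]
  have hLapp2 : ∀ x y : ℝ, L x y (0, 1) = (Bv x y, Dv x y) := by
    intro x y; simp [hL]
  have hdet : ∀ x ∈ I, ∀ y : ℝ,
      (fderiv ℝ F (x, y)).det = Av x y * Dv x y - Bv x y * Cv x y := by
    intro x hx y
    rw [(hLder x hx y).fderiv, clm_det_two, hLapp1, hLapp2]
  -- Step A : the Wronskian of (pm, qm) vanishes identically on I
  have hW : ∀ x ∈ I, deriv pm x * qm x - deriv qm x * pm x = 0 := by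
    intro x hx
    by_contra hWx
    set e₁ : ℝ := ((n:ℝ)+2) * (deriv pm x * qm x - deriv qm x * pm x) with he₁def
    have he₁ : e₁ ≠ 0 := mul_ne_zero (by positivity) hWx
    set e₂ : ℝ := deriv pm x * q₁ x - p₁ x * deriv qm x +
      ((n:ℝ)+2) * (deriv p₁ x * qm x - pm x * deriv q₁ x) with he₂def
    set e₃ : ℝ := ((n:ℝ)+2) * (deriv p₀ x * qm x - pm x * deriv q₀ x) with he₃def
    set e₄ : ℝ := deriv p₁ x * q₁ x - p₁ x * deriv q₁ x with he₄def
    set e₅ : ℝ := deriv p₀ x * q₁ x - p₁ x * deriv q₀ x with he₅def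
    set P : Polynomial ℝ :=
      C e₁ * X^(2*n+3) + C e₂ * X^(n+2) + C e₃ * X^(n+1) + C e₄ * X + C e₅ with hPdef
    have hPdeg : P.natDegree = 2*n+3 := by
      rw [hPdef]
      compute_degree!
      · rw [if_neg (by omega), if_neg (by omega), if_neg (by omega)]; simpa using he₁
      all_goals omega
    obtain ⟨y₀, hy₀⟩ := odd_natDegree_exists_root P (by rw [hPdeg]; exact ⟨n+1, by ring⟩)
    apply hns (x, y₀) ⟨hx, trivial⟩
    rw [hdet x hx y₀]
    have heval : P.eval y₀ = Av x y₀ * Dv x y₀ - Bv x y₀ * Cv x y₀ := by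
      rw [hPdef]
      simp only [hAv, hBv, hCv, hDv, he₁def, he₂def, he₃def, he₄def, he₅def,
        Polynomial.eval_add, Polynomial.eval_mul, Polynomial.eval_pow, Polynomial.eval_C,
        Polynomial.eval_X]
      push_cast
      ring
    rw [← heval, hy₀]
  -- Step B : qm never vanishes on I
  have hqmne : ∀ x ∈ I, qm x ≠ 0 := by
    intro x₀ hx₀ hq0
    have hpmx : pm x₀ ≠ 0 := by
      intro h
      exact hd x₀ hx₀ (by rw [hq0, h]; ring)
    have h1 : ∀ᶠ x in nhds x₀, pm x ≠ 0 := ((hpm x₀ hx₀).continuousAt).eventually_ne hpmx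
    have h2 : ∀ᶠ x in nhds x₀, x ∈ I := hIopen.mem_nhds hx₀
    obtain ⟨ε, hε, hball⟩ := Metric.eventually_nhds_iff_ball.mp (h1.and h2)
    have hconst := const_on_ball (f := fun x => qm x / pm x) hε (by
      intro y hy
      obtain ⟨hpy, hyI⟩ := hball y hy
      have hqd : HasDerivAt qm (deriv qm y) y := ((hqm y hyI).differentiableAt).hasDerivAt
      have hpd : HasDerivAt pm (deriv pm y) y := ((hpm y hyI).differentiableAt).hasDerivAt
      have := hqd.div hpd hpy
      refine this.congr_deriv (Eq.symm ?_)
      have hWy := hW y hyI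
      field_simp
      linarith)
    have hev : qm =ᶠ[nhds x₀] 0 := by
      filter_upwards [Metric.ball_mem_nhds x₀ hε] with y hy
      have h3 := hconst y hy
      rw [hq0, zero_div] at h3
      have hpy := (hball y hy).1
      show qm y = 0
      field_simp at h3
      simpa using h3
    obtain ⟨x₁, hx₁, hne⟩ := hqm0
    exact hne (hqm.eqOn_zero_of_preconnected_of_eventuallyEq_zero hIconn hx₀ hev hx₁)
  -- Step B' : pm = c * qm on I for a constant c
  obtain ⟨xq, hxq, -⟩ := hqm0
  set c : ℝ := pm xq / qm xq with hcdef
  have hc : ∀ x ∈ I, pm x = c * qm x := by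
    set u : ℝ → ℝ := fun x => pm x - c * qm x with hudef
    have huan : AnalyticOnNhd ℝ u I := fun x hx => (hpm x hx).sub (analyticAt_const.mul (hqm x hx))
    obtain ⟨ε, hε, hball⟩ := Metric.mem_nhds_iff.mp (hIopen.mem_nhds hxq)
    have hconst := const_on_ball (f := fun x => u x / qm x) hε (by
      intro y hy
      have hyI : y ∈ I := hball hy
      have hqy := hqmne y hyI
      have hqd : HasDerivAt qm (deriv qm y) y := ((hqm y hyI).differentiableAt).hasDerivAt
      have hpd : HasDerivAt pm (deriv pm y) y := ((hpm y hyI).differentiableAt).hasDerivAt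
      have hud : HasDerivAt u (deriv pm y - c * deriv qm y) y := hpd.sub (hqd.const_mul c)
      have := hud.div hqd hqy
      refine this.congr_deriv (Eq.symm ?_)
      have hWy := hW y hyI
      rw [hudef]
      field_simp
      ring_nf
      nlinarith [hWy])
    have huq : u xq = 0 := by
      rw [hudef, hcdef]
      simp only
      rw [div_mul_cancel₀ _ (hqmne xq hxq)]
      ring
    have hev : u =ᶠ[nhds xq] 0 := by
      filter_upwards [Metric.ball_mem_nhds xq hε] with y hy
      have h3 := hconst y hy
      rw [huq, zero_div] at h3
      have hqy := hqmne y (hball hy)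
      show u y = 0
      field_simp at h3
      simpa using h3
    intro x hx
    have := huan.eqOn_zero_of_preconnected_of_eventuallyEq_zero hIconn hxq hev hx
    simp only [hudef, Pi.zero_apply] at this
    linarith
  -- Step C : injectivity
  set a : ℝ → ℝ := fun x => p₁ x - c * q₁ x with hadef
  set b : ℝ → ℝ := fun x => p₀ x - c * q₀ x with hbdef
  have ha : ∀ x ∈ I, a x ≠ 0 := by
    intro x hx h
    apply hd x hx
    have h1 : p₁ x = c * q₁ x := by
      have := h
      rw [hadef] at this
      simp at this
      linarith
    rw [h1, hc x hx]
    ring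
  rintro ⟨x₁, y₁⟩ ⟨hx₁, -⟩ ⟨x₂, y₂⟩ ⟨hx₂, -⟩ hFeq
  rw [hFdef x₁ y₁, hFdef x₂ y₂] at hFeq
  have hE1 : pm x₁ * y₁ ^ (n+2) + p₁ x₁ * y₁ + p₀ x₁
      = pm x₂ * y₂ ^ (n+2) + p₁ x₂ * y₂ + p₀ x₂ := congrArg Prod.fst hFeq
  have hE2 : qm x₁ * y₁ ^ (n+2) + q₁ x₁ * y₁ + q₀ x₁
      = qm x₂ * y₂ ^ (n+2) + q₁ x₂ * y₂ + q₀ x₂ := congrArg Prod.snd hFeq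
  set u : ℝ := a x₁ * y₁ + b x₁ with hudef
  have hu2 : a x₂ * y₂ + b x₂ = u := by
    rw [hudef, hadef, hbdef]
    simp only
    have h1 := hc x₁ hx₁
    have h2 := hc x₂ hx₂
    linear_combination -hE1 + c * hE2 + y₁^(n+2) * h1 - y₂^(n+2) * h2
  set Y : ℝ → ℝ := fun x => (u - b x) / (a x) with hYdef
  have hY1 : Y x₁ = y₁ := by
    rw [hYdef]
    simp only [hudef]
    field_simp [ha x₁ hx₁]
    ring
  have hY2 : Y x₂ = y₂ := by
    rw [hYdef]
    simp only
    rw [← hu2]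
    field_simp [ha x₂ hx₂]
    ring
  set g : ℝ → ℝ := fun x => qm x * (Y x) ^ (n+2) + q₁ x * Y x + q₀ x with hgdef
  have hg12 : g x₁ = g x₂ := by
    rw [hgdef]; simp only
    rw [hY1, hY2]; exact hE2
  -- key derivative facts
  have key : ∀ x ∈ I, ∃ t : ℝ, HasDerivAt Y t x ∧
      HasDerivAt g ((L x (Y x) (1, t)).2) x ∧
      (L x (Y x) (1, t)).1 = c * (L x (Y x) (1, t)).2 := by
    intro x hx
    have hax := ha x hx
    have hbd : HasDerivAt b (deriv p₀ x - c * deriv q₀ x) x :=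
      ((hp₀ x hx).differentiableAt.hasDerivAt).sub
        (((hq₀ x hx).differentiableAt.hasDerivAt).const_mul c)
    have had : HasDerivAt a (deriv p₁ x - c * deriv q₁ x) x :=
      ((hp₁ x hx).differentiableAt.hasDerivAt).sub
        (((hq₁ x hx).differentiableAt.hasDerivAt).const_mul c)
    have hnum : HasDerivAt (fun s => u - b s) (0 - (deriv p₀ x - c * deriv q₀ x)) x :=
      (hasDerivAt_const x u).sub hbd
    have hYd := hnum.div had hax
    set t : ℝ := ((0 - (deriv p₀ x - c * deriv q₀ x)) * a x
      - (u - b x) * (deriv p₁ x - c * deriv q₁ x)) / (a x) ^ 2 with htdef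
    refine ⟨t, hYd, ?_, ?_⟩
    · have hpair : HasDerivAt (fun s => (s, Y s)) ((1 : ℝ), t) x :=
        (hasDerivAt_id x).prodMk hYd
      have hcomp : HasDerivAt (fun s => F (s, Y s)) (L x (Y x) ((1 : ℝ), t)) x :=
        HasFDerivAt.comp_hasDerivAt (f := fun s => ((s : ℝ), Y s)) x (hLder x hx (Y x)) hpair
      have hsndc := (ContinuousLinearMap.snd ℝ ℝ ℝ).hasFDerivAt.comp_hasDerivAt x hcomp
      have heq : (fun s => ((ContinuousLinearMap.snd ℝ ℝ ℝ) ∘ (fun s => F (s, Y s))) s) = g := by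
        funext s
        simp [Function.comp, hF, hgdef]
      rw [← heq]
      exact hsndc
    · -- first component has two derivative expressions
      have hpair : HasDerivAt (fun s => (s, Y s)) ((1 : ℝ), t) x :=
        (hasDerivAt_id x).prodMk hYd
      have hcomp : HasDerivAt (fun s => F (s, Y s)) (L x (Y x) ((1 : ℝ), t)) x :=
        HasFDerivAt.comp_hasDerivAt (f := fun s => ((s : ℝ), Y s)) x (hLder x hx (Y x)) hpair
      have hfstc := (ContinuousLinearMap.fst ℝ ℝ ℝ).hasFDerivAt.comp_hasDerivAt x hcomp
      have h1 : HasDerivAt (fun s => (F (s, Y s)).1) ((L x (Y x) ((1 : ℝ), t)).1) x := hfstc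
      -- second derivative expression via g
      have hsndc := (ContinuousLinearMap.snd ℝ ℝ ℝ).hasFDerivAt.comp_hasDerivAt x hcomp
      have heq : (fun s => ((ContinuousLinearMap.snd ℝ ℝ ℝ) ∘ (fun s => F (s, Y s))) s) = g := by
        funext s
        simp [Function.comp, hF, hgdef]
      have hgd : HasDerivAt g ((L x (Y x) ((1 : ℝ), t)).2) x := by
        rw [← heq]; exact hsndc
      have hphi : HasDerivAt (fun s => c * g s + u) (c * (L x (Y x) ((1 : ℝ), t)).2) x :=
        (hgd.const_mul c).add_const u
      have hev : (fun s => (F (s, Y s)).1) =ᶠ[nhds x] (fun s => c * g s + u) := by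
        filter_upwards [hIopen.mem_nhds hx] with s hs
        have has := ha s hs
        have hcs := hc s hs
        have hYs : a s * Y s + b s = u := by
          rw [hYdef]
          field_simp
          ring
        simp only [hadef, hbdef] at hYs
        rw [hF]
        simp only [hgdef]
        linear_combination (Y s) ^ (n+2) * hcs + hYs
      have h2 : HasDerivAt (fun s => (F (s, Y s)).1) (c * (L x (Y x) ((1 : ℝ), t)).2) x :=
        hphi.congr_of_eventuallyEq hev
      exact h1.unique h2
  have hg' : ∀ x ∈ I, deriv g x ≠ 0 := by
    intro x hx h0
    obtain ⟨t, hYd, hgd, hrel⟩ := key x hx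
    have h2 : (L x (Y x) (1, t)).2 = 0 := by rw [← hgd.deriv]; exact h0
    have h1 : (L x (Y x) (1, t)).1 = 0 := by rw [hrel, h2, mul_zero]
    apply hns (x, Y x) ⟨hx, trivial⟩
    rw [hdet x hx (Y x)]
    have hLlin : L x (Y x) (1, t)
        = (Av x (Y x) + t * Bv x (Y x), Cv x (Y x) + t * Dv x (Y x)) := by
      rw [hL]
      simp only [ContinuousLinearMap.add_apply, ContinuousLinearMap.smulRight_apply,
        ContinuousLinearMap.coe_fst', ContinuousLinearMap.coe_snd', Prod.smul_mk, Prod.mk_add_mk,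
        Prod.ext_iff, smul_eq_mul]
      constructor <;> ring
    rw [hLlin] at h1 h2
    simp only at h1 h2
    linear_combination Dv x (Y x) * h1 - Bv x (Y x) * h2
  have hx12 : x₁ = x₂ := by
    by_contra hne
    have key2 : ∀ s w : ℝ, s ∈ I → w ∈ I → s < w → g s = g w → False := by
      intro s w hs hw hlt hgeq
      have hIcc : Icc s w ⊆ I := (hIconn.ordConnected).out hs hw
      have hcont : ContinuousOn g (Icc s w) := by
        intro z hz
        obtain ⟨t, -, hgd, -⟩ := key z (hIcc hz)
        exact hgd.differentiableAt.continuousAt.continuousWithinAt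
      obtain ⟨ξ, hξ, hξ0⟩ := exists_deriv_eq_zero hlt hcont hgeq
      exact hg' ξ (hIcc ⟨hξ.1.le, hξ.2.le⟩) hξ0
    rcases lt_or_gt_of_ne hne with h | h
    · exact key2 x₁ x₂ hx₁ hx₂ h hg12
    · exact key2 x₂ x₁ hx₂ hx₁ h hg12.symm
  have hy12 : y₁ = y₂ := by rw [← hY1, ← hY2, hx12]
  rw [hx12, hy12]
end

section
/- Let F(x,y) = (p_m(x) yᵐ + p₁(x) y + p₀(x), q_m(x) yᵐ + q₁(x) y + q₀(x)) be a real analytic non-singular map on the strip Σ = I × ℝ, with integer m > 1 and with neither p_m nor q_m vanishing identically on I. If for every x ∈ I with d_{1m}(x) = 0 one has d*_{1m}(x) := p₁'(x) q_m(x) − q₁'(x) p_m(x) ≠ 0, then F is injective on Σ. -/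
open Set

section Helpers

open Polynomial Filter

/-- A convenient explicit continuous linear map `ℝ × ℝ →L[ℝ] ℝ × ℝ` given by a 2×2 matrix. -/
noncomputable def Phi (A B C D : ℝ) : ℝ × ℝ →L[ℝ] ℝ × ℝ :=
  ((A • ContinuousLinearMap.fst ℝ ℝ ℝ + B • ContinuousLinearMap.snd ℝ ℝ ℝ).prod
   (C • ContinuousLinearMap.fst ℝ ℝ ℝ + D • ContinuousLinearMap.snd ℝ ℝ ℝ))

lemma Phi_apply (A B C D : ℝ) (w : ℝ × ℝ) :
    Phi A B C D w = (A * w.1 + B * w.2, C * w.1 + D * w.2) := by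
  simp [Phi, smul_eq_mul]

lemma Phi_det (A B C D : ℝ) : (Phi A B C D).det = A * D - B * C := by
  have h : (Phi A B C D).det = LinearMap.det ((Phi A B C D) : ℝ × ℝ →ₗ[ℝ] ℝ × ℝ) := rfl
  rw [h, ← LinearMap.det_toMatrix (Module.Basis.finTwoProd ℝ), Matrix.det_fin_two]
  simp [LinearMap.toMatrix_apply, Phi_apply, Module.Basis.finTwoProd]

lemma clm_eq_Phi (T : ℝ × ℝ →L[ℝ] ℝ × ℝ) :
    T = Phi (T (1,0)).1 (T (0,1)).1 (T (1,0)).2 (T (0,1)).2 := by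
  ext <;> simp [Phi]

lemma clm_det_eq_zero {T : ℝ × ℝ →L[ℝ] ℝ × ℝ} {w : ℝ × ℝ} (hw : w ≠ 0) (h : T w = 0) :
    T.det = 0 := by
  set A := (T (1,0)).1; set B := (T (0,1)).1; set C := (T (1,0)).2; set D := (T (0,1)).2
  have hT : T = Phi A B C D := clm_eq_Phi T
  have hdet : T.det = A * D - B * C := by rw [hT, Phi_det]
  rw [hT, Phi_apply] at h
  have h1 : A * w.1 + B * w.2 = 0 := by simpa [Prod.ext_iff] using congrArg Prod.fst h
  have h2 : C * w.1 + D * w.2 = 0 := by simpa [Prod.ext_iff] using congrArg Prod.snd h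
  have hw' : w.1 ≠ 0 ∨ w.2 ≠ 0 := by
    by_contra hc
    push_neg at hc
    exact hw (Prod.ext hc.1 hc.2)
  rw [hdet]
  rcases hw' with h0 | h0
  · have : (A * D - B * C) * w.1 = 0 := by linear_combination D * h1 - B * h2
    exact (mul_eq_zero.mp this).resolve_right h0
  · have : (A * D - B * C) * w.2 = 0 := by linear_combination A * h2 - C * h1
    exact (mul_eq_zero.mp this).resolve_right h0

lemma exists_root_of_odd_natDegree' (p : ℝ[X]) (h : Odd p.natDegree) (hlc : 0 < p.leadingCoeff) :
    ∃ y, p.eval y = 0 := by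
  have hd0 : 0 < p.natDegree := Nat.pos_of_ne_zero (by rintro h0; rw [h0] at h; simp at h)
  have hdeg : 0 < p.degree := natDegree_pos_iff_degree_pos.mp hd0
  have h1 : Tendsto (fun x => eval x p) atTop atTop :=
    p.tendsto_atTop_of_leadingCoeff_nonneg hdeg hlc.le
  set q := p.comp (-X) with hq
  have hqdeg : q.natDegree = p.natDegree := by rw [hq, natDegree_comp]; simp
  have hqlc : q.leadingCoeff = -p.leadingCoeff := by
    rw [hq, leadingCoeff_comp (by simp)]; simp [h.neg_pow]
  have h2 : Tendsto (fun x => eval x q) atTop atBot :=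
    q.tendsto_atBot_of_leadingCoeff_nonpos
      (natDegree_pos_iff_degree_pos.mp (hqdeg ▸ hd0)) (by rw [hqlc]; linarith)
  obtain ⟨a, ha⟩ := (h1.eventually_ge_atTop 0).exists
  obtain ⟨b, hb⟩ := (h2.eventually_le_atBot 0).exists
  have hb' : eval (-b) p ≤ 0 := by rwa [hq, eval_comp, eval_neg, eval_X] at hb
  have := intermediate_value_univ (-b) a (f := fun x => eval x p) p.continuous_aeval
  obtain ⟨y, hy⟩ := this (by simp only [Set.mem_Icc]; exact ⟨hb', ha⟩)
  exact ⟨y, hy⟩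

lemma exists_root_of_odd_natDegree (p : ℝ[X]) (h : Odd p.natDegree) :
    ∃ y, p.eval y = 0 := by
  have hd0 : 0 < p.natDegree := Nat.pos_of_ne_zero (by rintro h0; rw [h0] at h; simp at h)
  have hp : p ≠ 0 := fun h0 => by simp [h0] at hd0
  rcases lt_trichotomy p.leadingCoeff 0 with hlc | hlc | hlc
  · obtain ⟨y, hy⟩ := exists_root_of_odd_natDegree' (-p) (by simpa using h) (by simpa using hlc)
    exact ⟨y, by simpa using hy⟩
  · exact absurd (leadingCoeff_eq_zero.mp hlc) hp
  · exact exists_root_of_odd_natDegree' p h hlc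

lemma exists_root_quintic (k : ℕ) (hk : 1 ≤ k) (A B C D E : ℝ) (hA : A ≠ 0) :
    ∃ y : ℝ, A * y^(2*k+1) + B * y^(k+1) + C * y^k + D * y + E = 0 := by
  set P : ℝ[X] := Polynomial.C A * X^(2*k+1) + Polynomial.C B * X^(k+1) + Polynomial.C C * X^k
      + Polynomial.C D * X^1 + Polynomial.C E * X^0 with hP
  have hco : P.coeff (2*k+1) = A := by
    simp only [hP, coeff_add, coeff_C_mul, coeff_X_pow]
    have h1 : ¬(2*k = k) := by omega
    have h2 : ¬(2*k+1 = k) := by omega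
    have h3 : ¬(k = 0) := by omega
    simp [h1, h2, h3]
  have hdegle : P.degree ≤ (2*k+1 : ℕ) := by
    rw [hP]
    refine le_trans (degree_add_le _ _) (max_le (le_trans (degree_add_le _ _)
      (max_le (le_trans (degree_add_le _ _) (max_le (le_trans (degree_add_le _ _)
      (max_le ?_ ?_)) ?_)) ?_)) ?_)
    all_goals refine le_trans (degree_C_mul_X_pow_le _ _) (by norm_cast; try omega)
  have hdeg : P.degree = (2*k+1 : ℕ) := le_antisymm hdegle (le_degree_of_ne_zero (hco ▸ hA))
  have hnat : P.natDegree = 2*k+1 := natDegree_eq_of_degree_eq_some hdeg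
  obtain ⟨y, hy⟩ := exists_root_of_odd_natDegree P (hnat ▸ ⟨k, rfl⟩)
  refine ⟨y, ?_⟩
  simpa [hP, eval_add, eval_mul, eval_pow] using hy

lemma hasFDerivAt_row {p0 p1 pM : ℝ → ℝ} {d0 d1 dM : ℝ} (m : ℕ) (x y : ℝ)
    (h0 : HasDerivAt p0 d0 x) (h1 : HasDerivAt p1 d1 x) (hM : HasDerivAt pM dM x) :
    HasFDerivAt (fun z : ℝ × ℝ => pM z.1 * z.2 ^ m + p1 z.1 * z.2 + p0 z.1)
      ((dM * y ^ m + d1 * y + d0) • ContinuousLinearMap.fst ℝ ℝ ℝ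
        + (pM x * (m * y ^ (m - 1)) + p1 x) • ContinuousLinearMap.snd ℝ ℝ ℝ) (x, y) := by
  have hfst : HasFDerivAt (Prod.fst : ℝ × ℝ → ℝ) (ContinuousLinearMap.fst ℝ ℝ ℝ) (x, y) :=
    hasFDerivAt_fst
  have hsnd : HasFDerivAt (Prod.snd : ℝ × ℝ → ℝ) (ContinuousLinearMap.snd ℝ ℝ ℝ) (x, y) :=
    hasFDerivAt_snd
  have hM' : HasFDerivAt (fun z : ℝ × ℝ => pM z.1)
      (dM • ContinuousLinearMap.fst ℝ ℝ ℝ) (x, y) := (hM.comp_hasFDerivAt (x, y) hfst : )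
  have h1' : HasFDerivAt (fun z : ℝ × ℝ => p1 z.1)
      (d1 • ContinuousLinearMap.fst ℝ ℝ ℝ) (x, y) := (h1.comp_hasFDerivAt (x, y) hfst : )
  have h0' : HasFDerivAt (fun z : ℝ × ℝ => p0 z.1)
      (d0 • ContinuousLinearMap.fst ℝ ℝ ℝ) (x, y) := (h0.comp_hasFDerivAt (x, y) hfst : )
  have hpow : HasFDerivAt (fun z : ℝ × ℝ => z.2 ^ m)
      ((m * y ^ (m - 1)) • ContinuousLinearMap.snd ℝ ℝ ℝ) (x, y) :=
    ((hasDerivAt_pow m y).comp_hasFDerivAt (x, y) hsnd : )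
  have := ((hM'.mul hpow).add (h1'.mul hsnd)).add h0'
  refine this.congr_fderiv ?_
  ext w <;> simp [smul_eq_mul] <;> ring

/-- constancy from vanishing derivative on an order-connected set -/
lemma eq_on_of_hasDerivAt_zero {I : Set ℝ} (hI : OrdConnected I) {f : ℝ → ℝ}
    (h : ∀ x ∈ I, HasDerivAt f 0 x) {x y : ℝ} (hx : x ∈ I) (hy : y ∈ I) : f x = f y := by
  have main : ∀ a ∈ I, ∀ b ∈ I, a < b → f a = f b := by
    intro a ha b hb hab
    have hsub : Icc a b ⊆ I := hI.out ha hb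
    obtain ⟨c, _, hc⟩ := exists_hasDerivAt_eq_slope f (fun _ => 0) hab
      (fun t ht => ((h t (hsub ht)).continuousAt).continuousWithinAt)
      (fun t ht => h t (hsub (Ioo_subset_Icc_self ht)))
    have hba : b - a ≠ 0 := sub_ne_zero.mpr hab.ne'
    have : f b - f a = 0 := (div_eq_zero_iff.mp hc.symm).resolve_right hba
    linarith
  rcases lt_trichotomy x y with hxy | hxy | hxy
  · exact main x hx y hy hxy
  · rw [hxy]
  · exact (main y hy x hx hxy).symm

end Helpers

/-- Theorem 2. If `d₁ₘ(x) = 0` implies `d*₁ₘ(x) = p₁' qₘ − q₁' pₘ ≠ 0`, then the analytic non-singular map `F` is injective on `Σ`. -/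
theorem theorem2_ii_injective
    (I : Set ℝ) (hIopen : IsOpen I) (hIconn : IsPreconnected I)
    (m : ℕ) (hm : 1 < m)
    (p₀ p₁ pm q₀ q₁ qm : ℝ → ℝ)
    (hp₀ : AnalyticOnNhd ℝ p₀ I) (hp₁ : AnalyticOnNhd ℝ p₁ I) (hpm : AnalyticOnNhd ℝ pm I)
    (hq₀ : AnalyticOnNhd ℝ q₀ I) (hq₁ : AnalyticOnNhd ℝ q₁ I) (hqm : AnalyticOnNhd ℝ qm I)
    (hpm0 : ∃ x ∈ I, pm x ≠ 0) (hqm0 : ∃ x ∈ I, qm x ≠ 0)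
    (F : ℝ × ℝ → ℝ × ℝ)
    (hFdef : ∀ x y : ℝ,
      F (x, y) = (pm x * y ^ m + p₁ x * y + p₀ x, qm x * y ^ m + q₁ x * y + q₀ x))
    (hns : ∀ z ∈ I ×ˢ (univ : Set ℝ), (fderiv ℝ F z).det ≠ 0)
    (hd : ∀ x ∈ I, p₁ x * qm x - q₁ x * pm x = 0 → deriv p₁ x * qm x - deriv q₁ x * pm x ≠ 0) :
    Set.InjOn F (I ×ˢ (univ : Set ℝ)) := by
  obtain ⟨k, hmk⟩ : ∃ k, m = k + 1 ∧ 1 ≤ k := ⟨m - 1, by omega, by omega⟩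
  have hOrd : OrdConnected I := hIconn.ordConnected
  -- derivative data
  have hder : ∀ x ∈ I, ∀ y : ℝ, HasFDerivAt F
      (Phi (deriv pm x * y ^ m + deriv p₁ x * y + deriv p₀ x)
           (pm x * (m * y ^ (m - 1)) + p₁ x)
           (deriv qm x * y ^ m + deriv q₁ x * y + deriv q₀ x)
           (qm x * (m * y ^ (m - 1)) + q₁ x)) (x, y) := by
    intro x hx y
    have hFeq : F = fun z : ℝ × ℝ =>
        (pm z.1 * z.2 ^ m + p₁ z.1 * z.2 + p₀ z.1,
         qm z.1 * z.2 ^ m + q₁ z.1 * z.2 + q₀ z.1) := funext fun z => by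
      rw [show z = (z.1, z.2) from rfl, hFdef z.1 z.2]
    rw [hFeq, Phi]
    exact (hasFDerivAt_row m x y ((hp₀ x hx).differentiableAt.hasDerivAt)
        ((hp₁ x hx).differentiableAt.hasDerivAt) ((hpm x hx).differentiableAt.hasDerivAt)).prodMk
      (hasFDerivAt_row m x y ((hq₀ x hx).differentiableAt.hasDerivAt)
        ((hq₁ x hx).differentiableAt.hasDerivAt) ((hqm x hx).differentiableAt.hasDerivAt))
  have hdet : ∀ x ∈ I, ∀ y : ℝ, (fderiv ℝ F (x, y)).det =
      (deriv pm x * y ^ m + deriv p₁ x * y + deriv p₀ x) * (qm x * (m * y ^ (m - 1)) + q₁ x)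
      - (pm x * (m * y ^ (m - 1)) + p₁ x) * (deriv qm x * y ^ m + deriv q₁ x * y + deriv q₀ x) := by
    intro x hx y
    rw [(hder x hx y).fderiv, Phi_det]
  -- Step 1: the Wronskian of pm and qm vanishes identically on I.
  have hW : ∀ x ∈ I, deriv pm x * qm x - pm x * deriv qm x = 0 := by
    intro x hx
    by_contra hA
    have hA' : (m : ℝ) * (deriv pm x * qm x - pm x * deriv qm x) ≠ 0 :=
      mul_ne_zero (by positivity) hA
    obtain ⟨y, hy⟩ := exists_root_quintic k hmk.2
      ((m : ℝ) * (deriv pm x * qm x - pm x * deriv qm x))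
      (deriv pm x * q₁ x - p₁ x * deriv qm x + m * (deriv p₁ x * qm x - pm x * deriv q₁ x))
      ((m : ℝ) * (deriv p₀ x * qm x - pm x * deriv q₀ x))
      (deriv p₁ x * q₁ x - p₁ x * deriv q₁ x)
      (deriv p₀ x * q₁ x - p₁ x * deriv q₀ x) hA'
    apply hns (x, y) ⟨hx, trivial⟩
    rw [hdet x hx y]
    obtain ⟨hmk1, _⟩ := hmk
    subst hmk1
    have hpow : (k + 1) - 1 = k := by omega
    rw [hpow] at *
    push_cast at hy ⊢
    linear_combination hy
  -- Step 2: d₁ₘ never vanishes on I.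
  have hd1m : ∀ x ∈ I, p₁ x * qm x - q₁ x * pm x ≠ 0 := by
    intro x hx h0
    have hds := hd x hx h0
    by_cases hz : pm x = 0 ∧ qm x = 0
    · exact hds (by rw [hz.1, hz.2]; ring)
    · set ds := deriv p₁ x * qm x - deriv q₁ x * pm x with hds_def
      set e := deriv p₀ x * qm x - deriv q₀ x * pm x with he_def
      set y := -e / ds with hy_def
      have hdy : ds * y + e = 0 := by
        rw [hy_def]
        field_simp
        ring
      have hWx := hW x hx
      apply hns (x, y) ⟨hx, trivial⟩
      rw [hdet x hx y]
      rcases not_and_or.mp hz with hpz | hqz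
      · -- pm x ≠ 0
        have hmul : pm x * ((deriv pm x * y ^ m + deriv p₁ x * y + deriv p₀ x) *
            (qm x * (m * y ^ (m - 1)) + q₁ x)
            - (pm x * (m * y ^ (m - 1)) + p₁ x) *
            (deriv qm x * y ^ m + deriv q₁ x * y + deriv q₀ x)) = 0 := by
          rw [hds_def] at hdy
          rw [he_def] at hdy
          linear_combination (pm x * (m * y ^ (m - 1)) + p₁ x) * y ^ m * hWx
            + (pm x * (m * y ^ (m - 1)) + p₁ x) * hdy
            - (deriv pm x * y ^ m + deriv p₁ x * y + deriv p₀ x) * h0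
        exact (mul_eq_zero.mp hmul).resolve_left hpz
      · -- qm x ≠ 0
        have hmul : qm x * ((deriv pm x * y ^ m + deriv p₁ x * y + deriv p₀ x) *
            (qm x * (m * y ^ (m - 1)) + q₁ x)
            - (pm x * (m * y ^ (m - 1)) + p₁ x) *
            (deriv qm x * y ^ m + deriv q₁ x * y + deriv q₀ x)) = 0 := by
          rw [hds_def] at hdy
          rw [he_def] at hdy
          linear_combination (qm x * (m * y ^ (m - 1)) + q₁ x) * y ^ m * hWx
            + (qm x * (m * y ^ (m - 1)) + q₁ x) * hdy
            - (deriv qm x * y ^ m + deriv q₁ x * y + deriv q₀ x) * h0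
        exact (mul_eq_zero.mp hmul).resolve_left hqz
  -- Step 3: (pm, qm) never vanishes; define r = sqrt (pm² + qm²)
  have hNpos : ∀ x ∈ I, 0 < pm x ^ 2 + qm x ^ 2 := by
    intro x hx
    have h' : ¬(pm x = 0 ∧ qm x = 0) := fun ⟨h1, h2⟩ => hd1m x hx (by rw [h1, h2]; ring)
    rcases not_and_or.mp h' with h | h <;> positivity
  set r : ℝ → ℝ := fun x => Real.sqrt (pm x ^ 2 + qm x ^ 2) with hr_def
  have hrpos : ∀ x ∈ I, 0 < r x := fun x hx => Real.sqrt_pos.mpr (hNpos x hx)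
  have hrsq : ∀ x ∈ I, r x ^ 2 = pm x ^ 2 + qm x ^ 2 :=
    fun x hx => Real.sq_sqrt (hNpos x hx).le
  -- the normalized vector (pm, qm)/r is constant on I
  have hNd : ∀ x ∈ I, HasDerivAt (fun t => pm t ^ 2 + qm t ^ 2)
      (2 * pm x * deriv pm x + 2 * qm x * deriv qm x) x := by
    intro x hx
    have h1 := ((hpm x hx).differentiableAt.hasDerivAt).pow 2
    have h2 := ((hqm x hx).differentiableAt.hasDerivAt).pow 2
    have := h1.add h2
    refine this.congr_deriv ?_
    push_cast
    ring
  have hrd : ∀ x ∈ I, HasDerivAt r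
      ((2 * pm x * deriv pm x + 2 * qm x * deriv qm x) / (2 * r x)) x := by
    intro x hx
    exact (hNd x hx).sqrt (hNpos x hx).ne'
  have hfd : ∀ x ∈ I, HasDerivAt (fun t => pm t / r t) 0 x := by
    intro x hx
    have h := ((hpm x hx).differentiableAt.hasDerivAt).div (hrd x hx) (hrpos x hx).ne'
    refine h.congr_deriv (Eq.symm ?_)
    have hrx := hrsq x hx
    have hrne := (hrpos x hx).ne'
    have hWx := hW x hx
    have h2r : (2 : ℝ) * r x ≠ 0 := by simp [hrne]
    rw [eq_comm, div_eq_zero_iff]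
    left
    rw [← mul_div_assoc, sub_eq_zero, eq_div_iff h2r]
    linear_combination 2 * deriv pm x * hrx + 2 * qm x * hWx
  have hgd : ∀ x ∈ I, HasDerivAt (fun t => qm t / r t) 0 x := by
    intro x hx
    have h := ((hqm x hx).differentiableAt.hasDerivAt).div (hrd x hx) (hrpos x hx).ne'
    refine h.congr_deriv (Eq.symm ?_)
    have hrx := hrsq x hx
    have hrne := (hrpos x hx).ne'
    have hWx := hW x hx
    have h2r : (2 : ℝ) * r x ≠ 0 := by simp [hrne]
    rw [eq_comm, div_eq_zero_iff]
    left
    rw [← mul_div_assoc, sub_eq_zero, eq_div_iff h2r]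
    linear_combination 2 * deriv qm x * hrx - 2 * pm x * hWx
  obtain ⟨x₀, hx₀, _⟩ := hpm0
  set a : ℝ := pm x₀ / r x₀ with ha_def
  set b : ℝ := qm x₀ / r x₀ with hb_def
  have hab : a ^ 2 + b ^ 2 = 1 := by
    rw [ha_def, hb_def]
    have := hrsq x₀ hx₀
    field_simp
    rw [← this]; exact div_self (pow_ne_zero 2 (hrpos x₀ hx₀).ne')
  have hpma : ∀ x ∈ I, pm x = a * r x := by
    intro x hx
    have := eq_on_of_hasDerivAt_zero hOrd hfd hx hx₀
    rw [ha_def, ← this]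
    field_simp [(hrpos x hx).ne']
  have hqmb : ∀ x ∈ I, qm x = b * r x := by
    intro x hx
    have := eq_on_of_hasDerivAt_zero hOrd hgd hx hx₀
    rw [hb_def, ← this]
    field_simp [(hrpos x hx).ne']
  -- u, v and the linear form killing the degree-m part
  set u : ℝ → ℝ := fun x => b * p₁ x - a * q₁ x with hu_def
  set v : ℝ → ℝ := fun x => b * p₀ x - a * q₀ x with hv_def
  have hu : ∀ x ∈ I, u x ≠ 0 := by
    intro x hx hu0
    apply hd1m x hx
    have h1 := hpma x hx
    have h2 := hqmb x hx
    rw [hu_def] at hu0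
    simp only at hu0
    linear_combination p₁ x * h2 - q₁ x * h1 + r x * hu0
  have hl : ∀ x ∈ I, ∀ y : ℝ, b * (F (x, y)).1 - a * (F (x, y)).2 = u x * y + v x := by
    intro x hx y
    rw [hFdef x y]
    have h1 := hpma x hx
    have h2 := hqmb x hx
    simp only [hu_def, hv_def]
    linear_combination y ^ m * b * h1 - y ^ m * a * h2
  -- key step: no two points with distinct first coordinates map to the same value
  have key : ∀ x1 ∈ I, ∀ x2 ∈ I, ∀ y1 y2 : ℝ, x1 < x2 → F (x1, y1) = F (x2, y2) → False := by
    intro x1 hx1 x2 hx2 y1 y2 hlt heq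
    set s : ℝ := u x1 * y1 + v x1 with hs
    have hs2 : u x2 * y2 + v x2 = s := by
      rw [hs, ← hl x1 hx1 y1, ← hl x2 hx2 y2, heq]
    set φ : ℝ → ℝ := fun t => (s - v t) / u t with hφ
    have hφI : ∀ t ∈ I, u t * φ t + v t = s := by
      intro t ht
      rw [hφ]
      field_simp [hu t ht]
      ring
    have hφ1 : φ x1 = y1 := by
      refine mul_left_cancel₀ (hu x1 hx1) ?_
      have h1 := hφI x1 hx1
      rw [hs] at h1
      linarith
    have hφ2 : φ x2 = y2 := by
      refine mul_left_cancel₀ (hu x2 hx2) ?_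
      have h1 := hφI x2 hx2
      rw [← hs2] at h1
      linarith
    have hIcc : Icc x1 x2 ⊆ I := hOrd.out hx1 hx2
    -- differentiability of φ on I
    have hφd : ∀ t ∈ I, DifferentiableAt ℝ φ t := by
      intro t ht
      apply DifferentiableAt.div
      · exact (differentiableAt_const s).sub
          (((hp₀ t ht).differentiableAt.const_mul b).sub
            ((hq₀ t ht).differentiableAt.const_mul a))
      · exact ((hp₁ t ht).differentiableAt.const_mul b).sub
          ((hq₁ t ht).differentiableAt.const_mul a)
      · exact hu t ht
    set w : ℝ → ℝ × ℝ := fun t => fderiv ℝ F (t, φ t) (1, deriv φ t) with hw_def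
    have hFγ : ∀ t ∈ I, HasDerivAt (fun t => F (t, φ t)) (w t) t := by
      intro t ht
      have hF' : HasFDerivAt F (fderiv ℝ F (t, φ t)) (t, φ t) :=
        (hder t ht (φ t)).differentiableAt.hasFDerivAt
      have hγ : HasDerivAt (fun t => (t, φ t)) ((1 : ℝ), deriv φ t) t :=
        (hasDerivAt_id t).prodMk ((hφd t ht).hasDerivAt)
      exact (hF'.comp_hasDerivAt t hγ : )
    have hhd : ∀ t ∈ I, HasDerivAt (fun t => a * (F (t, φ t)).1 + b * (F (t, φ t)).2)
        (a * (w t).1 + b * (w t).2) t := by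
      intro t ht
      have h1 : HasDerivAt (fun t => (F (t, φ t)).1) ((w t).1) t :=
        ((hasFDerivAt_fst (𝕜 := ℝ) (E := ℝ) (F := ℝ)).comp_hasDerivAt t (hFγ t ht) : )
      have h2 : HasDerivAt (fun t => (F (t, φ t)).2) ((w t).2) t :=
        ((hasFDerivAt_snd (𝕜 := ℝ) (E := ℝ) (F := ℝ)).comp_hasDerivAt t (hFγ t ht) : )
      exact (h1.const_mul a).add (h2.const_mul b)
    have hψd : ∀ t ∈ I, b * (w t).1 - a * (w t).2 = 0 := by
      intro t ht
      have h1 : HasDerivAt (fun t => (F (t, φ t)).1) ((w t).1) t :=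
        ((hasFDerivAt_fst (𝕜 := ℝ) (E := ℝ) (F := ℝ)).comp_hasDerivAt t (hFγ t ht) : )
      have h2 : HasDerivAt (fun t => (F (t, φ t)).2) ((w t).2) t :=
        ((hasFDerivAt_snd (𝕜 := ℝ) (E := ℝ) (F := ℝ)).comp_hasDerivAt t (hFγ t ht) : )
      have hD : HasDerivAt (fun t => b * (F (t, φ t)).1 - a * (F (t, φ t)).2)
          (b * (w t).1 - a * (w t).2) t := (h1.const_mul b).sub (h2.const_mul a)
      have hconst : (fun t => b * (F (t, φ t)).1 - a * (F (t, φ t)).2) =ᶠ[nhds t]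
          (fun _ => s) := by
        filter_upwards [hIopen.mem_nhds ht] with t' ht'
        rw [hl t' ht' (φ t'), hφI t' ht']
      have hD0 : HasDerivAt (fun t => b * (F (t, φ t)).1 - a * (F (t, φ t)).2) 0 t := by
        exact (hasDerivAt_const t s).congr_of_eventuallyEq hconst
      exact hD.unique hD0
    -- Rolle
    set h : ℝ → ℝ := fun t => a * (F (t, φ t)).1 + b * (F (t, φ t)).2 with hh_def
    have hcont : ContinuousOn h (Icc x1 x2) :=
      fun t ht => ((hhd t (hIcc ht)).continuousAt).continuousWithinAt
    have hval : h x1 = h x2 := by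
      rw [hh_def]
      simp only
      rw [hφ1, hφ2, heq]
    obtain ⟨c, hc, hc0⟩ := exists_deriv_eq_zero hlt hcont hval
    have hcI : c ∈ I := hIcc (Ioo_subset_Icc_self hc)
    have h1 : a * (w c).1 + b * (w c).2 = 0 := by
      rw [← (hhd c hcI).deriv]
      exact hc0
    have h2 : b * (w c).1 - a * (w c).2 = 0 := hψd c hcI
    have hw1 : (w c).1 = 0 := by linear_combination a * h1 + b * h2 - (w c).1 * hab
    have hw2 : (w c).2 = 0 := by linear_combination b * h1 - a * h2 - (w c).2 * hab
    have hw0 : w c = 0 := Prod.ext hw1 hw2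
    have hvec : ((1 : ℝ), deriv φ c) ≠ (0 : ℝ × ℝ) := by
      intro hcon
      have := congrArg Prod.fst hcon
      simp at this
    have hdet0 : fderiv ℝ F (c, φ c) (1, deriv φ c) = 0 := hw0
    exact hns (c, φ c) ⟨hcI, trivial⟩ (clm_det_eq_zero hvec hdet0)
  -- conclude
  rintro ⟨x1, y1⟩ hz1 ⟨x2, y2⟩ hz2 heq
  have hx1 : x1 ∈ I := hz1.1
  have hx2 : x2 ∈ I := hz2.1
  rcases lt_trichotomy x1 x2 with hlt | heqx | hgt
  · exact (key x1 hx1 x2 hx2 y1 y2 hlt heq).elim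
  · subst heqx
    have := hl x1 hx1 y1
    have h2 := hl x1 hx1 y2
    have : u x1 * y1 + v x1 = u x1 * y2 + v x1 := by
      rw [← hl x1 hx1 y1, ← hl x1 hx1 y2, heq]
    have hy : y1 = y2 := by
      have := mul_left_cancel₀ (hu x1 hx1) (by linarith : u x1 * y1 = u x1 * y2)
      exact this
    rw [hy]
  · exact (key x2 hx2 x1 hx1 y2 y1 hgt heq.symm).elim
end

section
/- Let F(x,y) = (p_m(x) yᵐ + p₁(x) y + p₀(x), q_m(x) yᵐ + q₁(x) y + q₀(x)) be a real analytic non-singular map on the strip Σ = I × ℝ, with m > 1 an even integer and with neither p_m nor q_m vanishing identically on I. If for every x ∈ I with d_{1m}(x) = 0 one has q_m(x) ≠ 0, then F is injective on Σ. -/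
open Set

section InjHelpers

open Polynomial Filter

private lemma det2' (L : ℝ × ℝ →L[ℝ] ℝ × ℝ) :
    L.det = (L (1,0)).1 * (L (0,1)).2 - (L (0,1)).1 * (L (1,0)).2 := by
  have : L.det = LinearMap.det (L : ℝ × ℝ →ₗ[ℝ] ℝ × ℝ) := rfl
  rw [this, ← LinearMap.det_toMatrix (Module.Basis.finTwoProd ℝ), Matrix.det_fin_two]
  simp [LinearMap.toMatrix_apply]

private lemma odd_root' (p : ℝ[X]) (h : Odd p.natDegree) : ∃ x, p.eval x = 0 := by
  have hp0 : p ≠ 0 := by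
    intro h0; rw [h0] at h; simp [Nat.odd_iff] at h
  suffices H : ∀ q : ℝ[X], Odd q.natDegree → 0 < q.leadingCoeff → ∃ x, q.eval x = 0 by
    rcases lt_trichotomy 0 p.leadingCoeff with hl | hl | hl
    · exact H p h hl
    · exact absurd hl.symm (leadingCoeff_ne_zero.mpr hp0)
    · obtain ⟨x, hx⟩ := H (-p) (by simpa using h) (by simpa using hl)
      exact ⟨x, by simpa using hx⟩
  intro q hq hql
  have hq0 : q ≠ 0 := leadingCoeff_ne_zero.mp hql.ne'
  have hqdeg : 0 < q.degree := by
    rw [← natDegree_pos_iff_degree_pos]; rcases hq with ⟨k, hk⟩; omega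
  have h1 : Tendsto (fun x => q.eval x) atTop atTop :=
    q.tendsto_atTop_of_leadingCoeff_nonneg hqdeg hql.le
  set r : ℝ[X] := q.comp (-X) with hr
  have hrdeg : r.natDegree = q.natDegree := by
    rw [hr, natDegree_comp]; simp
  have hrl : r.leadingCoeff = -q.leadingCoeff := by
    rw [hr, leadingCoeff_comp (by simp)]
    rw [show (-X : ℝ[X]).leadingCoeff = -1 by simp, hq.neg_one_pow]
    ring
  have hrdeg' : 0 < r.degree := by
    rw [← natDegree_pos_iff_degree_pos, hrdeg]
    rcases hq with ⟨k, hk⟩; omega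
  have h2 : Tendsto (fun x => r.eval x) atTop atBot :=
    r.tendsto_atBot_of_leadingCoeff_nonpos hrdeg' (by rw [hrl]; linarith)
  obtain ⟨b, hb⟩ := (h1.eventually (eventually_ge_atTop 0)).exists
  obtain ⟨c, hc⟩ := (h2.eventually (eventually_le_atBot 0)).exists
  have hceq : r.eval c = q.eval (-c) := by rw [hr, eval_comp]; simp
  have hc' : q.eval (-c) ≤ 0 := hceq ▸ hc
  have hIvt := intermediate_value_univ (-c) b (f := fun x => q.eval x) q.continuous
  obtain ⟨x, hx⟩ := hIvt ⟨hc', hb⟩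
  exact ⟨x, hx⟩

private lemma oddfun_root' (n : ℕ) (hn : Odd n) (c d : ℝ) (hc : c ≠ 0) :
    ∃ y, c * y ^ n + d = 0 := by
  have h1 : (C c * X ^ n + C d).natDegree = n := by
    rw [natDegree_add_eq_left_of_natDegree_lt]
    · exact natDegree_C_mul_X_pow n c hc
    · rw [natDegree_C_mul_X_pow n c hc, natDegree_C]
      rcases hn with ⟨k, hk⟩; omega
  obtain ⟨x, hx⟩ := odd_root' (C c * X ^ n + C d) (h1 ▸ hn)
  exact ⟨x, by simpa using hx⟩

private lemma big_root' (n k l : ℕ) (hn : Odd n) (hk : k < n) (hl : l < n) (h1 : 1 < n)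
    (c a b d e : ℝ) (hc : c ≠ 0) :
    ∃ y, c * y ^ n + (a * y ^ k + b * y ^ l + d * y + e) = 0 := by
  have hC : ∀ (u : ℝ) (j : ℕ), (C u * X ^ j).natDegree ≤ j := fun u j =>
    natDegree_C_mul_X_pow_le u j
  have h2 : (C a * X ^ k + C b * X ^ l + C d * X + C e).natDegree < n := by
    refine lt_of_le_of_lt (natDegree_add_le _ _) (sup_lt_iff.mpr ⟨?_, ?_⟩)
    · refine lt_of_le_of_lt (natDegree_add_le _ _) (sup_lt_iff.mpr ⟨?_, ?_⟩)
      · refine lt_of_le_of_lt (natDegree_add_le _ _) (sup_lt_iff.mpr ⟨?_, ?_⟩)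
        · exact lt_of_le_of_lt (hC a k) hk
        · exact lt_of_le_of_lt (hC b l) hl
      · simpa using lt_of_le_of_lt (natDegree_C_mul_X_pow_le d 1) h1
    · rw [natDegree_C]; rcases hn with ⟨j, hj⟩; omega
  have h3 : (C c * X ^ n + (C a * X ^ k + C b * X ^ l + C d * X + C e)).natDegree = n := by
    rw [natDegree_add_eq_left_of_natDegree_lt
      (by rw [natDegree_C_mul_X_pow n c hc]; exact h2),
      natDegree_C_mul_X_pow n c hc]
  obtain ⟨x, hx⟩ := odd_root' _ (h3 ▸ hn)
  exact ⟨x, by simpa using hx⟩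

private lemma quot_const' {s : Set ℝ} (hs : Convex ℝ s) (hso : IsOpen s) {f g : ℝ → ℝ}
    (hf : ∀ x ∈ s, DifferentiableAt ℝ f x) (hg : ∀ x ∈ s, DifferentiableAt ℝ g x)
    (hgne : ∀ x ∈ s, g x ≠ 0)
    (hW : ∀ x ∈ s, deriv f x * g x - f x * deriv g x = 0)
    {x y : ℝ} (hx : x ∈ s) (hy : y ∈ s) : f x * g y = f y * g x := by
  set F : ℝ → ℝ := fun t => f t / g t with hF
  have hDer : ∀ z ∈ s, HasDerivAt F 0 z := by
    intro z hz
    have h := ((hf z hz).hasDerivAt).div ((hg z hz).hasDerivAt) (hgne z hz)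
    have : (deriv f z * g z - f z * deriv g z) / g z ^ 2 = 0 := by
      rw [hW z hz]; simp
    rwa [this] at h
  have hdiff : DifferentiableOn ℝ F s := fun z hz =>
    ((hDer z hz).differentiableAt).differentiableWithinAt
  have hfd : ∀ z ∈ s, fderivWithin ℝ F s z = 0 := by
    intro z hz
    rw [fderivWithin_of_isOpen hso hz, (hDer z hz).hasFDerivAt.fderiv]
    ext; simp
  have hconst : F x = F y :=
    hs.is_const_of_fderivWithin_eq_zero hdiff hfd hx hy
  have h5 : f x / g x = f y / g y := hconst
  rw [div_eq_div_iff (hgne x hx) (hgne y hy)] at h5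
  exact h5

private lemma det_formula' (m : ℕ) (p₀ p₁ pm q₀ q₁ qm : ℝ → ℝ)
    (p₀' p₁' pm' q₀' q₁' qm' : ℝ) (x y : ℝ)
    (hp₀ : HasDerivAt p₀ p₀' x) (hp₁ : HasDerivAt p₁ p₁' x) (hpm : HasDerivAt pm pm' x)
    (hq₀ : HasDerivAt q₀ q₀' x) (hq₁ : HasDerivAt q₁ q₁' x) (hqm : HasDerivAt qm qm' x) :
    (fderiv ℝ (fun z : ℝ × ℝ =>
      (pm z.1 * z.2 ^ m + p₁ z.1 * z.2 + p₀ z.1,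
       qm z.1 * z.2 ^ m + q₁ z.1 * z.2 + q₀ z.1)) (x, y)).det
    = (pm' * y ^ m + p₁' * y + p₀') * (qm x * (↑m * y ^ (m-1)) + q₁ x)
      - (pm x * (↑m * y ^ (m-1)) + p₁ x) * (qm' * y ^ m + q₁' * y + q₀') := by
  set G : ℝ × ℝ → ℝ × ℝ := fun z =>
      (pm z.1 * z.2 ^ m + p₁ z.1 * z.2 + p₀ z.1,
       qm z.1 * z.2 ^ m + q₁ z.1 * z.2 + q₀ z.1) with hG
  have hGdiff : DifferentiableAt ℝ G (x, y) := by
    apply DifferentiableAt.prodMk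
    · exact (((hpm.differentiableAt.comp _ differentiableAt_fst).mul
        (differentiableAt_snd.pow m)).add
        ((hp₁.differentiableAt.comp _ differentiableAt_fst).mul differentiableAt_snd)).add
        (hp₀.differentiableAt.comp _ differentiableAt_fst)
    · exact (((hqm.differentiableAt.comp _ differentiableAt_fst).mul
        (differentiableAt_snd.pow m)).add
        ((hq₁.differentiableAt.comp _ differentiableAt_fst).mul differentiableAt_snd)).add
        (hq₀.differentiableAt.comp _ differentiableAt_fst)
  have hxslice : HasDerivAt (fun t => G (t, y))
      (pm' * y ^ m + p₁' * y + p₀', qm' * y ^ m + q₁' * y + q₀') x := by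
    apply HasDerivAt.prodMk
    · exact ((hpm.mul_const (y ^ m)).add (hp₁.mul_const y)).add hp₀
    · exact ((hqm.mul_const (y ^ m)).add (hq₁.mul_const y)).add hq₀
  have hyslice : HasDerivAt (fun t => G (x, t))
      (pm x * (↑m * y ^ (m-1)) + p₁ x * 1, qm x * (↑m * y ^ (m-1)) + q₁ x * 1) y := by
    apply HasDerivAt.prodMk
    · exact (((hasDerivAt_pow m y).const_mul (pm x)).add
        ((hasDerivAt_id y).const_mul (p₁ x))).add_const (p₀ x)
    · exact (((hasDerivAt_pow m y).const_mul (qm x)).add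
        ((hasDerivAt_id y).const_mul (q₁ x))).add_const (q₀ x)
  have h1 : HasDerivAt (fun t => G (t, y)) (fderiv ℝ G (x, y) (1, 0)) x :=
    hGdiff.hasFDerivAt.comp_hasDerivAt x ((hasDerivAt_id x).prodMk (hasDerivAt_const x y))
  have h2 : HasDerivAt (fun t => G (x, t)) (fderiv ℝ G (x, y) (0, 1)) y :=
    hGdiff.hasFDerivAt.comp_hasDerivAt y ((hasDerivAt_const y x).prodMk (hasDerivAt_id y))
  have e1 := h1.unique hxslice
  have e2 := h2.unique hyslice
  rw [det2', e1, e2]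
  ring

private lemma sign_const' {s : Set ℝ} (hs : IsPreconnected s) {f : ℝ → ℝ}
    (hf : ContinuousOn f s) (hne : ∀ x ∈ s, f x ≠ 0) {x y : ℝ}
    (hx : x ∈ s) (hy : y ∈ s) (hfx : 0 < f x) : 0 < f y := by
  by_contra h
  have hy0 : f y < 0 := lt_of_le_of_ne (not_lt.mp h) (hne y hy)
  obtain ⟨z, hz, hz0⟩ := hs.intermediate_value₂ hy hx hf continuousOn_const hy0.le hfx.le
  exact hne z hz hz0

end InjHelpers

/-- Theorem 2. For `m` even, if `d₁ₘ(x) = 0` implies `qₘ(x) ≠ 0`, then the analytic non-singular map `F` is injective on `Σ`. -/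
theorem theorem2_iii_injective
    (I : Set ℝ) (hIopen : IsOpen I) (hIconn : IsPreconnected I)
    (m : ℕ) (hm : 1 < m) (hmeven : Even m)
    (p₀ p₁ pm q₀ q₁ qm : ℝ → ℝ)
    (hp₀ : AnalyticOnNhd ℝ p₀ I) (hp₁ : AnalyticOnNhd ℝ p₁ I) (hpm : AnalyticOnNhd ℝ pm I)
    (hq₀ : AnalyticOnNhd ℝ q₀ I) (hq₁ : AnalyticOnNhd ℝ q₁ I) (hqm : AnalyticOnNhd ℝ qm I)
    (hpm0 : ∃ x ∈ I, pm x ≠ 0) (hqm0 : ∃ x ∈ I, qm x ≠ 0)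
    (F : ℝ × ℝ → ℝ × ℝ)
    (hFdef : ∀ x y : ℝ,
      F (x, y) = (pm x * y ^ m + p₁ x * y + p₀ x, qm x * y ^ m + q₁ x * y + q₀ x))
    (hns : ∀ z ∈ I ×ˢ (univ : Set ℝ), (fderiv ℝ F z).det ≠ 0)
    (hd : ∀ x ∈ I, p₁ x * qm x - q₁ x * pm x = 0 → qm x ≠ 0) :
    Set.InjOn F (I ×ˢ (univ : Set ℝ)) := by
  obtain ⟨x₀, hx₀I, hqmx₀⟩ := hqm0
  have hconv : Convex ℝ I := convex_iff_ordConnected.mpr hIconn.ordConnected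
  have hFeq : F = fun z : ℝ × ℝ =>
      (pm z.1 * z.2 ^ m + p₁ z.1 * z.2 + p₀ z.1,
       qm z.1 * z.2 ^ m + q₁ z.1 * z.2 + q₀ z.1) :=
    funext fun z => by obtain ⟨a, b⟩ := z; exact hFdef a b
  -- pointwise derivatives
  have Dp₀ : ∀ x ∈ I, HasDerivAt p₀ (deriv p₀ x) x :=
    fun x hx => ((hp₀ x hx).differentiableAt).hasDerivAt
  have Dp₁ : ∀ x ∈ I, HasDerivAt p₁ (deriv p₁ x) x :=
    fun x hx => ((hp₁ x hx).differentiableAt).hasDerivAt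
  have Dpm : ∀ x ∈ I, HasDerivAt pm (deriv pm x) x :=
    fun x hx => ((hpm x hx).differentiableAt).hasDerivAt
  have Dq₀ : ∀ x ∈ I, HasDerivAt q₀ (deriv q₀ x) x :=
    fun x hx => ((hq₀ x hx).differentiableAt).hasDerivAt
  have Dq₁ : ∀ x ∈ I, HasDerivAt q₁ (deriv q₁ x) x :=
    fun x hx => ((hq₁ x hx).differentiableAt).hasDerivAt
  have Dqm : ∀ x ∈ I, HasDerivAt qm (deriv qm x) x :=
    fun x hx => ((hqm x hx).differentiableAt).hasDerivAt
  -- the Jacobian determinant formula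
  have hdet : ∀ x ∈ I, ∀ y : ℝ, (fderiv ℝ F (x, y)).det
      = (deriv pm x * y ^ m + deriv p₁ x * y + deriv p₀ x)
          * (qm x * (↑m * y ^ (m-1)) + q₁ x)
        - (pm x * (↑m * y ^ (m-1)) + p₁ x)
          * (deriv qm x * y ^ m + deriv q₁ x * y + deriv q₀ x) := by
    intro x hx y
    rw [hFeq]
    exact det_formula' m p₀ p₁ pm q₀ q₁ qm _ _ _ _ _ _ x y
      (Dp₀ x hx) (Dp₁ x hx) (Dpm x hx) (Dq₀ x hx) (Dq₁ x hx) (Dqm x hx)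
  have hdet0 : ∀ x ∈ I, ∀ y : ℝ,
      (deriv pm x * y ^ m + deriv p₁ x * y + deriv p₀ x)
          * (qm x * (↑m * y ^ (m-1)) + q₁ x)
        - (pm x * (↑m * y ^ (m-1)) + p₁ x)
          * (deriv qm x * y ^ m + deriv q₁ x * y + deriv q₀ x) ≠ 0 := by
    intro x hx y
    rw [← hdet x hx y]
    exact hns (x, y) (Set.mem_prod.mpr ⟨hx, trivial⟩)
  -- power bookkeeping
  have hym : ∀ y : ℝ, y ^ m = y ^ (m-1) * y := by
    intro y; rw [← pow_succ]; congr 1; omega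
  have hy2m : ∀ y : ℝ, y ^ (2*m-1) = (y ^ (m-1))^2 * y := by
    intro y; rw [← pow_mul, ← pow_succ]; congr 1; omega
  have hodd2m : Odd (2*m-1) := ⟨m - 1, by omega⟩
  have hoddm1 : Odd (m - 1) := Nat.Even.sub_odd (by omega) hmeven odd_one
  have hmne : (m : ℝ) ≠ 0 := Nat.cast_ne_zero.mpr (by omega)
  -- Step 1: the Wronskian of pm, qm vanishes on I
  have hW : ∀ x ∈ I, deriv pm x * qm x - pm x * deriv qm x = 0 := by
    intro x hx
    by_contra hW0
    have hc : (m : ℝ) * (deriv pm x * qm x - pm x * deriv qm x) ≠ 0 :=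
      mul_ne_zero hmne (sub_ne_zero.mpr (fun h => hW0 (sub_eq_zero.mpr h)))
    obtain ⟨y, hy⟩ := big_root' (2*m-1) m (m-1) hodd2m (by omega) (by omega) (by omega)
      ((m : ℝ) * (deriv pm x * qm x - pm x * deriv qm x))
      (deriv pm x * q₁ x + (m : ℝ) * deriv p₁ x * qm x
        - (m : ℝ) * pm x * deriv q₁ x - p₁ x * deriv qm x)
      ((m : ℝ) * (deriv p₀ x * qm x - pm x * deriv q₀ x))
      (deriv p₁ x * q₁ x - p₁ x * deriv q₁ x)
      (deriv p₀ x * q₁ x - p₁ x * deriv q₀ x) hc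
    apply hdet0 x hx y
    rw [hym y]
    rw [hym y, hy2m y] at hy
    linear_combination hy
  -- Step 2: qm never vanishes on I
  have hqmne : ∀ x ∈ I, qm x ≠ 0 := by
    intro x₁ hx₁ hqz
    have hd₁ : p₁ x₁ * qm x₁ - q₁ x₁ * pm x₁ ≠ 0 := fun h => hd x₁ hx₁ h hqz
    have hpmx₁ : pm x₁ ≠ 0 := by
      intro h; apply hd₁; rw [hqz, h]; ring
    -- find a ball around x₁ inside I where pm ≠ 0
    have hev : ∀ᶠ t in nhds x₁, pm t ≠ 0 ∧ t ∈ I := by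
      have h1 : ∀ᶠ t in nhds x₁, pm t ≠ 0 :=
        ((hpm x₁ hx₁).continuousAt).eventually_ne hpmx₁
      have h2 : ∀ᶠ t in nhds x₁, t ∈ I := hIopen.mem_nhds hx₁
      exact h1.and h2
    obtain ⟨ε, hε, hball⟩ := Metric.eventually_nhds_iff_ball.mp hev
    have hballI : ∀ t ∈ Metric.ball x₁ ε, t ∈ I := fun t ht => (hball t ht).2
    have hconst : ∀ t ∈ Metric.ball x₁ ε, qm t * pm x₁ = qm x₁ * pm t := by
      intro t ht
      exact quot_const' (convex_ball x₁ ε) Metric.isOpen_ball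
        (fun z hz => ((hqm z (hballI z hz)).differentiableAt))
        (fun z hz => ((hpm z (hballI z hz)).differentiableAt))
        (fun z hz => (hball z hz).1)
        (fun z hz => by linarith [hW z (hballI z hz)])
        ht (Metric.mem_ball_self hε)
    have hqm0' : ∀ᶠ t in nhds x₁, qm t = 0 := by
      filter_upwards [Metric.ball_mem_nhds x₁ hε] with t ht
      have h0 : qm t * pm x₁ = 0 := by rw [hconst t ht, hqz]; ring
      exact (mul_eq_zero.mp h0).resolve_right hpmx₁
    have hzero : Set.EqOn qm 0 I :=
      hqm.eqOn_zero_of_preconnected_of_eventuallyEq_zero hIconn hx₁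
        (Filter.eventuallyEq_iff_exists_mem.mpr
          ⟨{t | qm t = 0}, hqm0', fun t ht => ht⟩)
    exact hqmx₀ (hzero hx₀I)
  -- Step 3: pm = lam * qm on I
  set lam : ℝ := pm x₀ / qm x₀ with hlamdef
  have hlam : ∀ x ∈ I, pm x = lam * qm x := by
    intro x hx
    have h := quot_const' hconv hIopen
      (fun z hz => ((hpm z hz).differentiableAt))
      (fun z hz => ((hqm z hz).differentiableAt))
      hqmne hW hx hx₀I
    rw [hlamdef]
    field_simp
    linear_combination h
  have hdlam : ∀ x ∈ I, deriv pm x = lam * deriv qm x := by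
    intro x hx
    have h := hW x hx
    have h2 := hlam x hx
    have h3 := hqmne x hx
    have h4 : deriv pm x * qm x = lam * deriv qm x * qm x := by
      rw [h2] at h; linear_combination h
    exact mul_right_cancel₀ h3 h4
  -- Step 4: a := p₁ - lam * q₁ never vanishes on I
  have hane : ∀ x ∈ I, p₁ x - lam * q₁ x ≠ 0 := by
    intro x hx ha0
    obtain ⟨y, hy⟩ := oddfun_root' (m-1) hoddm1 ((m : ℝ) * qm x) (q₁ x)
      (mul_ne_zero hmne (hqmne x hx))
    apply hdet0 x hx y
    have e1 := hlam x hx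
    have e2 : p₁ x = lam * q₁ x := by linarith [ha0]
    rw [e1, e2]
    linear_combination ((deriv pm x * y ^ m + deriv p₁ x * y + deriv p₀ x)
      - lam * (deriv qm x * y ^ m + deriv q₁ x * y + deriv q₀ x)) * hy
  -- Step 5: injectivity
  rintro ⟨x₁, y₁⟩ hz₁ ⟨x₂, y₂⟩ hz₂ hFz
  have hx₁I : x₁ ∈ I := hz₁.1
  have hx₂I : x₂ ∈ I := hz₂.1
  rw [hFdef x₁ y₁, hFdef x₂ y₂] at hFz
  have E1 : pm x₁ * y₁ ^ m + p₁ x₁ * y₁ + p₀ x₁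
      = pm x₂ * y₂ ^ m + p₁ x₂ * y₂ + p₀ x₂ := congrArg Prod.fst hFz
  have E2 : qm x₁ * y₁ ^ m + q₁ x₁ * y₁ + q₀ x₁
      = qm x₂ * y₂ ^ m + q₁ x₂ * y₂ + q₀ x₂ := congrArg Prod.snd hFz
  set u : ℝ := (p₁ x₁ - lam * q₁ x₁) * y₁ + (p₀ x₁ - lam * q₀ x₁) with hudef
  have hu : (p₁ x₂ - lam * q₁ x₂) * y₂ + (p₀ x₂ - lam * q₀ x₂) = u := by
    rw [hudef]
    linear_combination (hlam x₁ hx₁I) * y₁ ^ m - (hlam x₂ hx₂I) * y₂ ^ m - E1 + lam * E2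
  -- the function H
  set w : ℝ → ℝ := fun x => (u - (p₀ x - lam * q₀ x)) / (p₁ x - lam * q₁ x) with hwdef
  set H : ℝ → ℝ := fun x => qm x * (w x) ^ m + q₁ x * (w x) + q₀ x with hHdef
  have hw₁ : w x₁ = y₁ := by
    rw [hwdef]
    field_simp [hane x₁ hx₁I]
    rw [hudef]; ring
  have hw₂ : w x₂ = y₂ := by
    rw [hwdef]
    field_simp [hane x₂ hx₂I]
    rw [← hu]; ring
  have hH12 : H x₁ = H x₂ := by
    rw [hHdef]; simp only [hw₁, hw₂]; exact E2
  -- derivative of w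
  have hwD : ∀ x ∈ I, HasDerivAt w
      (((0 - (deriv p₀ x - lam * deriv q₀ x)) * (p₁ x - lam * q₁ x)
        - (u - (p₀ x - lam * q₀ x)) * (deriv p₁ x - lam * deriv q₁ x))
        / (p₁ x - lam * q₁ x) ^ 2) x := by
    intro x hx
    exact ((hasDerivAt_const x u).sub ((Dp₀ x hx).sub ((Dq₀ x hx).const_mul lam))).div
      ((Dp₁ x hx).sub ((Dq₁ x hx).const_mul lam)) (hane x hx)
  have hHD : ∀ x ∈ I, HasDerivAt H
      (deriv qm x * (w x) ^ m + qm x * (↑m * (w x) ^ (m-1) *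
        (((0 - (deriv p₀ x - lam * deriv q₀ x)) * (p₁ x - lam * q₁ x)
          - (u - (p₀ x - lam * q₀ x)) * (deriv p₁ x - lam * deriv q₁ x))
          / (p₁ x - lam * q₁ x) ^ 2))
        + (deriv q₁ x * (w x) + q₁ x *
        (((0 - (deriv p₀ x - lam * deriv q₀ x)) * (p₁ x - lam * q₁ x)
          - (u - (p₀ x - lam * q₀ x)) * (deriv p₁ x - lam * deriv q₁ x))
          / (p₁ x - lam * q₁ x) ^ 2))
        + deriv q₀ x) x := by
    intro x hx
    exact (((Dqm x hx).mul ((hwD x hx).pow m)).add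
      ((Dq₁ x hx).mul (hwD x hx))).add (Dq₀ x hx)
  -- key identity: (p₁ - lam q₁) * H' = - detExpr(x, w x)
  have hkey : ∀ x ∈ I, (p₁ x - lam * q₁ x) *
      (deriv qm x * (w x) ^ m + qm x * (↑m * (w x) ^ (m-1) *
        (((0 - (deriv p₀ x - lam * deriv q₀ x)) * (p₁ x - lam * q₁ x)
          - (u - (p₀ x - lam * q₀ x)) * (deriv p₁ x - lam * deriv q₁ x))
          / (p₁ x - lam * q₁ x) ^ 2))
        + (deriv q₁ x * (w x) + q₁ x *
        (((0 - (deriv p₀ x - lam * deriv q₀ x)) * (p₁ x - lam * q₁ x)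
          - (u - (p₀ x - lam * q₀ x)) * (deriv p₁ x - lam * deriv q₁ x))
          / (p₁ x - lam * q₁ x) ^ 2))
        + deriv q₀ x)
      = -((deriv pm x * (w x) ^ m + deriv p₁ x * (w x) + deriv p₀ x)
          * (qm x * (↑m * (w x) ^ (m-1)) + q₁ x)
        - (pm x * (↑m * (w x) ^ (m-1)) + p₁ x)
          * (deriv qm x * (w x) ^ m + deriv q₁ x * (w x) + deriv q₀ x)) := by
    intro x hx
    have hub : u - (p₀ x - lam * q₀ x) = (p₁ x - lam * q₁ x) * w x := by
      rw [hwdef]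
      field_simp
      exact (mul_div_cancel_right₀ _ (hane x hx)).symm
    rw [hub, hlam x hx, hdlam x hx, hym (w x)]
    field_simp [hane x hx]
    ring
  -- continuity of derivatives of analytic functions
  have hcd : ∀ f : ℝ → ℝ, AnalyticOnNhd ℝ f I → ContinuousOn (deriv f) I := fun f hf =>
    (hf.deriv).continuousOn
  set A : ℝ → ℝ := fun x => p₁ x - lam * q₁ x with hAdef
  set D : ℝ → ℝ := fun x =>
    (deriv pm x * (w x) ^ m + deriv p₁ x * (w x) + deriv p₀ x)
      * (qm x * (↑m * (w x) ^ (m-1)) + q₁ x)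
    - (pm x * (↑m * (w x) ^ (m-1)) + p₁ x)
      * (deriv qm x * (w x) ^ m + deriv q₁ x * (w x) + deriv q₀ x) with hDdef
  have hDne : ∀ x ∈ I, D x ≠ 0 := fun x hx => hdet0 x hx (w x)
  have hAcont : ContinuousOn A I :=
    (hp₁.continuousOn).sub (continuousOn_const.mul (hq₁.continuousOn))
  have hwcont : ContinuousOn w I :=
    (continuousOn_const.sub ((hp₀.continuousOn).sub
      (continuousOn_const.mul (hq₀.continuousOn)))).div hAcont hane
  have hDcont : ContinuousOn D I := by
    apply ContinuousOn.sub
    · exact ((((hcd pm hpm).mul (hwcont.pow m)).add ((hcd p₁ hp₁).mul hwcont)).add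
        (hcd p₀ hp₀)).mul
        (((hqm.continuousOn).mul (continuousOn_const.mul (hwcont.pow (m-1)))).add
          (hq₁.continuousOn))
    · exact (((hpm.continuousOn).mul (continuousOn_const.mul (hwcont.pow (m-1)))).add
        (hp₁.continuousOn)).mul
        ((((hcd qm hqm).mul (hwcont.pow m)).add ((hcd q₁ hq₁).mul hwcont)).add
          (hcd q₀ hq₀))
  set g : ℝ → ℝ := fun x => -D x / A x with hgdef
  have hg : ∀ x ∈ I, deriv H x = g x := by
    intro x hx
    rw [(hHD x hx).deriv, hgdef, eq_div_iff (hane x hx)]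
    linear_combination hkey x hx
  have hgcont : ContinuousOn g I := (hDcont.neg).div hAcont hane
  have hgne : ∀ x ∈ I, g x ≠ 0 := fun x hx =>
    div_ne_zero (neg_ne_zero.mpr (hDne x hx)) (hane x hx)
  have hHcont : ContinuousOn H I := fun x hx =>
    ((hHD x hx).differentiableAt.continuousAt).continuousWithinAt
  have hHinj : Set.InjOn H I := by
    rcases (hgne x₁ hx₁I).lt_or_gt with hneg | hpos
    · -- g x₁ < 0 : H strictly antitone
      have hall : ∀ x ∈ interior I, deriv H x < 0 := by
        intro x hx
        rw [hIopen.interior_eq] at hx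
        rw [hg x hx]
        have := sign_const' hIconn hgcont.neg
          (fun z hz => neg_ne_zero.mpr (hgne z hz)) hx₁I hx (by rw [Pi.neg_apply]; linarith)
        rw [Pi.neg_apply] at this; linarith
      exact (strictAntiOn_of_deriv_neg hconv hHcont hall).injOn
    · have hall : ∀ x ∈ interior I, 0 < deriv H x := by
        intro x hx
        rw [hIopen.interior_eq] at hx
        rw [hg x hx]
        exact sign_const' hIconn hgcont hgne hx₁I hx hpos
      exact (strictMonoOn_of_deriv_pos hconv hHcont hall).injOn
  have hx12 : x₁ = x₂ := hHinj hx₁I hx₂I hH12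
  subst hx12
  have hy12 : y₁ = y₂ := by
    have h1 : (p₁ x₁ - lam * q₁ x₁) * y₂ + (p₀ x₁ - lam * q₀ x₁) = u := hu
    rw [hudef] at h1
    have := hane x₁ hx₁I
    have h2 : (p₁ x₁ - lam * q₁ x₁) * y₂ = (p₁ x₁ - lam * q₁ x₁) * y₁ := by linarith
    exact (mul_left_cancel₀ this h2).symm
  rw [hy12]
end
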